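/- arXiv:2007.07952 — 7 statements merged into one kernel-verified Lean document; each statement's English description precedes it below -/
import Mathlib

section
/- Let n ≥ 1, k ≥ 0 be integers, d ≥ 2 even, r ∈ ℝ and m > 0 be such that (n+k)/d + r > 0. Let α ∈ ℕⁿ be a multi-index with |α| = k and let g be a nonnegative homogeneous polynomial of degree d on ℝⁿ such that x ↦ x^α is integrable on G₁(g) = {x : g(x) ≤ 1}. Then ∫_{ℝⁿ} x^α g(x)^r exp(−g(x)^{1/m}) dx = ((n+k)/d)·m·Γ(m((n+k)/d + r))·∫_{G₁(g)} x^α dx. In particular, ∫_{ℝⁿ} g(x)·exp(−g(x)) dx = (n/d)·Γ(n/d + 1)·|G₁(g)| whenever |G₁(g)| < +∞. -/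
/-!
Write `s ^ r * exp (-s ^ (1 / m)) = ∫_{u > s} w u du`, where `w` is minus its derivative. By
Fubini the integral becomes `∫_{u > 0} w u (∫_{g ≤ u} x ^ α dx) du`. Homogeneity gives
`{g ≤ u} = u ^ (1 / d) • {g ≤ 1}`, so the inner integral is `u ^ ((n + k) / d) ∫_{G₁(g)} x ^ α dx`,
and the remaining one-dimensional integral is a combination of two Gamma integrals. The zero set
of `g`, where the representation at `s = 0` may fail, is a cone and hence negligible for
`x ^ α dx`.
-/

open MeasureTheory

noncomputable section

def G1 {n : ℕ} (g : MvPolynomial (Fin n) ℝ) : Set (Fin n → ℝ) :=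
  {x | MvPolynomial.eval x g ≤ 1}

open Set Filter Topology Real Module Pointwise

namespace MvPolynomial

theorem IsHomogeneous.eval_smul {σ R : Type*} [Fintype σ] [CommSemiring R]
    {g : MvPolynomial σ R} {d : ℕ} (hg : g.IsHomogeneous d) (t : R) (x : σ → R) :
    eval (t • x) g = t ^ d * eval x g := by
  rw [eval_eq', eval_eq', Finset.mul_sum]
  refine Finset.sum_congr rfl fun s hs => ?_
  have hdeg : ∑ i, s i = d := by
    rw [← Finsupp.degree_eq_sum, Finsupp.degree_eq_weight_one]
    exact hg (mem_support_iff.mp hs)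
  simp_rw [Pi.smul_apply, smul_eq_mul, mul_pow, Finset.prod_mul_distrib,
    Finset.prod_pow_eq_pow_sum, hdeg]
  ring

end MvPolynomial

theorem Finset.prod_smul_apply_pow {ι R : Type*} [Fintype ι] [CommMonoid R] (α : ι → ℕ) (t : R)
    (x : ι → R) : ∏ i, (t • x) i ^ α i = t ^ (∑ i, α i) * ∏ i, x i ^ α i := by
  simp_rw [Pi.smul_apply, smul_eq_mul, mul_pow, Finset.prod_mul_distrib,
    Finset.prod_pow_eq_pow_sum]

def IsPosHomogeneous {E : Type*} [SMul ℝ E] (f : E → ℝ) (k : ℕ) : Prop :=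
  ∀ ⦃t : ℝ⦄, 0 < t → ∀ x, f (t • x) = t ^ k * f x

namespace IsPosHomogeneous

section Module

variable {E : Type*} [AddCommGroup E] [Module ℝ E] {f g : E → ℝ} {k d : ℕ}

theorem abs (hf : IsPosHomogeneous f k) : IsPosHomogeneous (fun x => |f x|) k := fun t ht x => by
  simp only [hf ht, abs_mul, abs_of_pos (pow_pos ht k)]

theorem smul_setOf_le (hg : IsPosHomogeneous g d) {t : ℝ} (ht : 0 < t) (c : ℝ) :
    t • {x | g x ≤ c} = {x | g x ≤ t ^ d * c} := by
  ext x
  rw [mem_smul_set_iff_inv_smul_mem₀ ht.ne', mem_ofPred_eq, mem_ofPred_eq, hg (inv_pos.2 ht),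
    inv_pow, inv_mul_le_iff₀ (pow_pos ht d)]

theorem smul_setOf_eq_zero (hg : IsPosHomogeneous g d) {t : ℝ} (ht : 0 < t) :
    t • {x | g x = 0} = {x | g x = 0} := by
  ext x
  rw [mem_smul_set_iff_inv_smul_mem₀ ht.ne', mem_ofPred_eq, mem_ofPred_eq, hg (inv_pos.2 ht),
    mul_eq_zero, or_iff_right (pow_ne_zero _ (inv_ne_zero ht.ne'))]

theorem rpow_inv_smul_setOf_le_one (hg : IsPosHomogeneous g d) (hd : d ≠ 0) {u : ℝ} (hu : 0 < u) :
    u ^ (d⁻¹ : ℝ) • {x | g x ≤ 1} = {x | g x ≤ u} := by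
  rw [hg.smul_setOf_le (rpow_pos_of_pos hu _), mul_one, ← rpow_natCast, ← rpow_mul hu.le,
    inv_mul_cancel₀ (Nat.cast_ne_zero.2 hd), rpow_one]

end Module

section Haar

variable {E : Type*} [NormedAddCommGroup E] [NormedSpace ℝ E] [MeasurableSpace E] [BorelSpace E]
  [FiniteDimensional ℝ E] (μ : Measure E) [μ.IsAddHaarMeasure] {f g : E → ℝ} {k d : ℕ}

theorem setIntegral_smul_set (hf : IsPosHomogeneous f k) {t : ℝ} (ht : 0 < t) (s : Set E) :
    ∫ x in t • s, f x ∂μ = t ^ (finrank ℝ E + k) * ∫ x in s, f x ∂μ := by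
  have h := μ.setIntegral_comp_smul_of_pos f s ht
  simp only [hf ht, integral_const_mul, smul_eq_mul] at h
  rw [pow_add, mul_assoc, h, ← mul_assoc, mul_inv_cancel₀ (pow_ne_zero _ ht.ne'), one_mul]

theorem integrableOn_smul_set (hf : IsPosHomogeneous f k) {t : ℝ} (ht : 0 < t) {s : Set E}
    (hs : MeasurableSet s) (hfs : IntegrableOn f s μ) : IntegrableOn f (t • s) μ := by
  rw [← integrable_indicator_iff (hs.const_smul₀ t), ← integrable_comp_smul_iff μ _ ht.ne']
  have h : (fun x => (t • s).indicator f (t • x)) = s.indicator fun x => t ^ k * f x := by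
    ext x
    by_cases hx : x ∈ s <;> simp [hx, smul_mem_smul_set_iff₀ ht.ne', hf ht]
  rw [h, integrable_indicator_iff hs]
  exact hfs.const_mul _

theorem setIntegral_setOf_le (hf : IsPosHomogeneous f k) (hg : IsPosHomogeneous g d) (hd : d ≠ 0)
    {u : ℝ} (hu : 0 < u) :
    ∫ x in {x | g x ≤ u}, f x ∂μ =
      u ^ (((finrank ℝ E : ℝ) + k) / d) * ∫ x in {x | g x ≤ 1}, f x ∂μ := by
  rw [← hg.rpow_inv_smul_setOf_le_one hd hu, hf.setIntegral_smul_set μ (rpow_pos_of_pos hu _),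
    ← rpow_natCast, ← rpow_mul hu.le, div_eq_inv_mul]
  push_cast
  rfl

theorem integrableOn_setOf_le (hf : IsPosHomogeneous f k) (hg : IsPosHomogeneous g d) (hd : d ≠ 0)
    (hgm : Measurable g) (hint : IntegrableOn f {x | g x ≤ 1} μ) {u : ℝ} (hu : 0 < u) :
    IntegrableOn f {x | g x ≤ u} μ := by
  rw [← hg.rpow_inv_smul_setOf_le_one hd hu]
  exact hf.integrableOn_smul_set μ (rpow_pos_of_pos hu _) (measurableSet_le hgm measurable_const)
    hint

theorem ae_eq_zero_of_eq_zero (hf : IsPosHomogeneous f k) (hg : IsPosHomogeneous g d)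
    (hk : finrank ℝ E + k ≠ 0) (hgm : Measurable g)
    (hint : IntegrableOn f {x | g x = 0} μ) : ∀ᵐ x ∂μ, g x = 0 → f x = 0 := by
  have hZ : MeasurableSet {x | g x = 0} := measurableSet_eq_fun hgm measurable_const
  -- `{g = 0}` is a cone, so scaling by `2` multiplies `∫_{g = 0} |f|` by `2 ^ (finrank + k) > 1`.
  have hscale := hf.abs.setIntegral_smul_set μ two_pos {x | g x = 0}
  rw [hg.smul_setOf_eq_zero two_pos] at hscale
  have hzero : ∫ x in {x | g x = 0}, |f x| ∂μ = 0 := by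
    have h1 : (1 : ℝ) < 2 ^ (finrank ℝ E + k) := one_lt_pow₀ one_lt_two hk
    nlinarith
  rw [setIntegral_eq_zero_iff_of_nonneg_ae (ae_of_all _ fun x => abs_nonneg _) hint.abs,
    EventuallyEq, ae_restrict_iff' hZ] at hzero
  filter_upwards [hzero] with x hx hgx
  exact abs_eq_zero.1 (hx hgx)

end Haar

end IsPosHomogeneous

theorem integrableOn_Ioi_rpow_mul_exp_neg_rpow {p c s : ℝ} (hp : 0 < p) (hs : 0 < s) :
    IntegrableOn (fun u => u ^ c * exp (-u ^ p)) (Ioi s) := by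
  rcases le_or_gt 0 c with hc | hc
  · exact (integrableOn_rpow_mul_exp_neg_rpow (by linarith) hp).mono_set (Ioi_subset_Ioi hs.le)
  have hexp : IntegrableOn (fun u => s ^ c * (u ^ (0 : ℝ) * exp (-u ^ p))) (Ioi s) :=
    ((integrableOn_rpow_mul_exp_neg_rpow (by norm_num) hp).mono_set
      (Ioi_subset_Ioi hs.le)).const_mul _
  refine hexp.mono' (by fun_prop) ?_
  filter_upwards [ae_restrict_mem measurableSet_Ioi] with u (hu : s < u)
  rw [norm_of_nonneg (by have := hs.trans hu; positivity), rpow_zero, one_mul]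
  exact mul_le_mul_of_nonneg_right (rpow_le_rpow_of_nonpos hs hu.le hc.le) (exp_pos _).le

/-- Minus the derivative of `s ↦ s ^ r * exp (-s ^ (1 / m))`. -/
def stretchedExpWeight (m r u : ℝ) : ℝ :=
  (1 / m * u ^ (r + 1 / m - 1) - r * u ^ (r - 1)) * exp (-u ^ (1 / m))

theorem measurable_stretchedExpWeight (m r : ℝ) : Measurable (stretchedExpWeight m r) := by
  unfold stretchedExpWeight
  fun_prop

theorem stretchedExpWeight_mul_rpow (m r q : ℝ) {u : ℝ} (hu : 0 < u) :
    stretchedExpWeight m r u * u ^ q =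
      1 / m * (u ^ (q + r + 1 / m - 1) * exp (-u ^ (1 / m))) -
        r * (u ^ (q + r - 1) * exp (-u ^ (1 / m))) := by
  have e₁ : u ^ (q + r + 1 / m - 1) = u ^ (r + 1 / m - 1) * u ^ q := by
    rw [← rpow_add hu]; ring_nf
  have e₂ : u ^ (q + r - 1) = u ^ (r - 1) * u ^ q := by
    rw [← rpow_add hu]; ring_nf
  rw [e₁, e₂, stretchedExpWeight]
  ring

theorem hasDerivAt_neg_rpow_mul_exp_neg_rpow (m r : ℝ) {u : ℝ} (hu : 0 < u) :
    HasDerivAt (fun u => -(u ^ r * exp (-u ^ (1 / m)))) (stretchedExpWeight m r u) u := by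
  have h := ((hasDerivAt_rpow_const (p := r) (Or.inl hu.ne')).mul
    (hasDerivAt_rpow_const (p := 1 / m) (Or.inl hu.ne')).neg.exp).neg
  have e : u ^ (r + 1 / m - 1) = u ^ r * u ^ (1 / m - 1) := by
    rw [← rpow_add hu]; ring_nf
  refine h.congr_deriv ?_
  simp only [stretchedExpWeight, e, Pi.neg_apply]
  ring

theorem integrableOn_Ioi_stretchedExpWeight {m r s : ℝ} (hm : 0 < m) (hs : 0 < s) :
    IntegrableOn (stretchedExpWeight m r) (Ioi s) := by
  have h := ((integrableOn_Ioi_rpow_mul_exp_neg_rpow (c := r + 1 / m - 1) (one_div_pos.2 hm)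
    hs).const_mul (1 / m)).sub
    ((integrableOn_Ioi_rpow_mul_exp_neg_rpow (c := r - 1) (one_div_pos.2 hm) hs).const_mul r)
  refine IntegrableOn.congr_fun h (fun u (hu : s < u) => ?_) measurableSet_Ioi
  simpa using (stretchedExpWeight_mul_rpow m r 0 (hs.trans hu)).symm

theorem integral_Ioi_stretchedExpWeight {m r s : ℝ} (hm : 0 < m) (hs : 0 < s) :
    ∫ u in Ioi s, stretchedExpWeight m r u = s ^ r * exp (-s ^ (1 / m)) := by
  have hlim : Tendsto (fun u => -(u ^ r * exp (-u ^ (1 / m)))) atTop (𝓝 0) := by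
    have h := (tendsto_rpow_mul_exp_neg_mul_atTop_nhds_zero (m * r) 1 one_pos).comp
      (tendsto_rpow_atTop (one_div_pos.2 hm))
    refine (h.congr' ?_).neg.trans (by rw [neg_zero])
    filter_upwards [eventually_gt_atTop 0] with u hu
    rw [Function.comp_apply, ← rpow_mul hu.le, show 1 / m * (m * r) = r by field_simp, neg_one_mul]
  rw [integral_Ioi_of_hasDerivAt_of_tendsto'
    (fun u hu => hasDerivAt_neg_rpow_mul_exp_neg_rpow m r (hs.trans_le hu))
    (integrableOn_Ioi_stretchedExpWeight hm hs) hlim]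
  ring

theorem integrableOn_stretchedExpWeight_mul_rpow {m r q : ℝ} (hm : 0 < m) (hqr : 0 < q + r) :
    IntegrableOn (fun u => stretchedExpWeight m r u * u ^ q) (Ioi 0) := by
  have h := ((integrableOn_rpow_mul_exp_neg_rpow (s := q + r + 1 / m - 1)
    (by have := one_div_pos.2 hm; linarith) (one_div_pos.2 hm)).const_mul (1 / m)).sub
    ((integrableOn_rpow_mul_exp_neg_rpow (s := q + r - 1) (by linarith)
      (one_div_pos.2 hm)).const_mul r)
  exact IntegrableOn.congr_fun h (fun u hu => (stretchedExpWeight_mul_rpow m r q hu).symm)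
    measurableSet_Ioi

theorem integral_stretchedExpWeight_mul_rpow {m r q : ℝ} (hm : 0 < m) (hqr : 0 < q + r) :
    ∫ u in Ioi 0, stretchedExpWeight m r u * u ^ q = q * m * Gamma (m * (q + r)) := by
  have hm' := one_div_pos.2 hm
  rw [setIntegral_congr_fun measurableSet_Ioi fun u hu => stretchedExpWeight_mul_rpow m r q hu,
    integral_sub ((integrableOn_rpow_mul_exp_neg_rpow (by linarith) hm').const_mul _)
      ((integrableOn_rpow_mul_exp_neg_rpow (by linarith) hm').const_mul _),
    integral_const_mul, integral_const_mul,
    integral_rpow_mul_exp_neg_rpow hm' (by linarith),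
    integral_rpow_mul_exp_neg_rpow hm' (by linarith),
    show (q + r + 1 / m - 1 + 1) / (1 / m) = m * (q + r) + 1 by field_simp; ring,
    show (q + r - 1 + 1) / (1 / m) = m * (q + r) by field_simp; ring, Gamma_add_one (by positivity)]
  field_simp
  ring

section LayerCake

variable {X : Type*} {P g : X → ℝ} {w : ℝ → ℝ}

def layerIntegrand (P g : X → ℝ) (w : ℝ → ℝ) : X × ℝ → ℝ :=
  ({z | g z.1 ≤ z.2} ∩ {z | 0 < z.2}).indicator fun z => P z.1 * w z.2

theorem layerIntegrand_eq_of_pos {u : ℝ} (hu : 0 < u) :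
    (fun x => layerIntegrand P g w (x, u)) = {x | g x ≤ u}.indicator fun x => P x * w u := by
  ext x
  by_cases hx : g x ≤ u <;> simp [layerIntegrand, indicator, hx, hu]

theorem layerIntegrand_eq_zero_of_nonpos {u : ℝ} (hu : u ≤ 0) (x : X) :
    layerIntegrand P g w (x, u) = 0 := by
  simp [layerIntegrand, indicator, hu.not_gt]

theorem layerIntegrand_eq_of_pos_left {x : X} (hx : 0 < g x) :
    (fun u => layerIntegrand P g w (x, u)) = (Ici (g x)).indicator fun u => P x * w u := by
  ext u
  by_cases hu : g x ≤ u <;> simp [layerIntegrand, indicator, hu, hx.trans_le]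

theorem norm_layerIntegrand (z : X × ℝ) :
    ‖layerIntegrand P g w z‖ = layerIntegrand (fun x => |P x|) g (fun u => |w u|) z := by
  simp only [layerIntegrand, norm_indicator_eq_indicator_norm, norm_mul, Real.norm_eq_abs]

variable [MeasurableSpace X] {μ : Measure X}

theorem integral_layerIntegrand_fst (hgm : Measurable g) (u : ℝ) :
    ∫ x, layerIntegrand P g w (x, u) ∂μ =
      (Ioi 0).indicator (fun u => w u * ∫ x in {x | g x ≤ u}, P x ∂μ) u := by
  rcases le_or_gt u 0 with hu | hu
  · simp [layerIntegrand_eq_zero_of_nonpos hu, hu.not_gt]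
  · rw [layerIntegrand_eq_of_pos hu, integral_indicator (measurableSet_le hgm measurable_const),
      integral_mul_const, indicator_of_mem (mem_Ioi.2 hu), mul_comm]

theorem integrable_layerIntegrand [SFinite μ] (hPm : Measurable P) (hgm : Measurable g)
    (hwm : Measurable w) (hPint : ∀ u, 0 < u → IntegrableOn P {x | g x ≤ u} μ)
    (hwint : IntegrableOn (fun u => w u * ∫ x in {x | g x ≤ u}, |P x| ∂μ) (Ioi 0)) :
    Integrable (layerIntegrand P g w) (μ.prod volume) := by
  have hm : Measurable (layerIntegrand P g w) :=
    ((hPm.comp measurable_fst).mul (hwm.comp measurable_snd)).indicator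
      ((measurableSet_le (hgm.comp measurable_fst) measurable_snd).inter
        (measurableSet_lt measurable_const measurable_snd))
  refine (integrable_prod_iff' hm.aestronglyMeasurable).2 ⟨ae_of_all _ fun u => ?_, ?_⟩
  · rcases le_or_gt u 0 with hu | hu
    · simp [layerIntegrand_eq_zero_of_nonpos hu]
    · rw [layerIntegrand_eq_of_pos hu,
        integrable_indicator_iff (measurableSet_le hgm measurable_const)]
      exact (hPint u hu).mul_const _
  · simp_rw [norm_layerIntegrand, integral_layerIntegrand_fst hgm]
    rw [integrable_indicator_iff measurableSet_Ioi]
    refine IntegrableOn.congr_fun hwint.norm (fun u _ => ?_) measurableSet_Ioi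
    rw [norm_mul, Real.norm_eq_abs, Real.norm_eq_abs,
      abs_of_nonneg (integral_nonneg fun x => abs_nonneg (P x))]

theorem integral_mul_comp_eq_integral_Ioi_mul_setIntegral_le [SFinite μ] {φ : ℝ → ℝ}
    (hPm : Measurable P) (hgm : Measurable g) (hwm : Measurable w)
    (hφ : ∀ s, 0 < s → ∫ u in Ioi s, w u = φ s) (hPg : ∀ᵐ x ∂μ, P x = 0 ∨ 0 < g x)
    (hPint : ∀ u, 0 < u → IntegrableOn P {x | g x ≤ u} μ)
    (hwint : IntegrableOn (fun u => w u * ∫ x in {x | g x ≤ u}, |P x| ∂μ) (Ioi 0)) :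
    ∫ x, P x * φ (g x) ∂μ = ∫ u in Ioi 0, w u * ∫ x in {x | g x ≤ u}, P x ∂μ := by
  have hslice : ∀ᵐ x ∂μ, P x * φ (g x) = ∫ u, layerIntegrand P g w (x, u) := by
    filter_upwards [hPg] with x hx
    rcases hx with hP | hg
    · simp [layerIntegrand, indicator, hP]
    · rw [layerIntegrand_eq_of_pos_left hg, integral_indicator measurableSet_Ici,
        integral_Ici_eq_integral_Ioi, integral_const_mul, hφ _ hg]
  rw [integral_congr_ae hslice,
    integral_integral_swap (f := fun x u => layerIntegrand P g w (x, u))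
      (integrable_layerIntegrand hPm hgm hwm hPint hwint),
    ← integral_indicator measurableSet_Ioi]
  simp_rw [integral_layerIntegrand_fst hgm]

end LayerCake

namespace IsPosHomogeneous

variable {E : Type*} [NormedAddCommGroup E] [NormedSpace ℝ E] [MeasurableSpace E] [BorelSpace E]
  [FiniteDimensional ℝ E] (μ : Measure E) [μ.IsAddHaarMeasure] {P g : E → ℝ} {k d : ℕ}

theorem integral_mul_rpow_mul_exp_neg_rpow (hP : IsPosHomogeneous P k)
    (hg : IsPosHomogeneous g d) (hd : d ≠ 0) (hk : finrank ℝ E + k ≠ 0) (hPm : Measurable P)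
    (hgm : Measurable g) (hg0 : ∀ x, 0 ≤ g x) (hint : IntegrableOn P {x | g x ≤ 1} μ)
    {m r : ℝ} (hm : 0 < m) (hqr : 0 < ((finrank ℝ E : ℝ) + k) / d + r) :
    ∫ x, P x * g x ^ r * exp (-(g x ^ (1 / m))) ∂μ =
      ((finrank ℝ E : ℝ) + k) / d * m * Gamma (m * (((finrank ℝ E : ℝ) + k) / d + r)) *
        ∫ x in {x | g x ≤ 1}, P x ∂μ := by
  set q : ℝ := ((finrank ℝ E : ℝ) + k) / d
  have hPg : ∀ᵐ x ∂μ, P x = 0 ∨ 0 < g x := by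
    filter_upwards [hP.ae_eq_zero_of_eq_zero μ hg hk hgm
      (hint.mono_set fun x (hx : g x = 0) => hx.le.trans zero_le_one)] with x hx
    exact (hg0 x).eq_or_lt.imp (fun h => hx h.symm) id
  have hlevel : ∀ f : E → ℝ, IsPosHomogeneous f k → ∀ u ∈ Ioi (0 : ℝ),
      stretchedExpWeight m r u * ∫ x in {x | g x ≤ u}, f x ∂μ =
        stretchedExpWeight m r u * u ^ q * ∫ x in {x | g x ≤ 1}, f x ∂μ := fun f hf u hu => by
    rw [hf.setIntegral_setOf_le μ hg hd hu, mul_assoc]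
  have hwint := IntegrableOn.congr_fun
    ((integrableOn_stretchedExpWeight_mul_rpow hm hqr).mul_const
      (∫ x in {x | g x ≤ 1}, |P x| ∂μ)) (fun u hu => (hlevel _ hP.abs u hu).symm) measurableSet_Ioi
  simp_rw [mul_assoc (P _)]
  rw [integral_mul_comp_eq_integral_Ioi_mul_setIntegral_le hPm hgm
      (measurable_stretchedExpWeight m r) (fun s hs => integral_Ioi_stretchedExpWeight hm hs) hPg
      (fun u hu => hP.integrableOn_setOf_le μ hg hd hgm hint hu) hwint,
    setIntegral_congr_fun measurableSet_Ioi (hlevel P hP), integral_mul_const,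
    integral_stretchedExpWeight_mul_rpow hm hqr]

end IsPosHomogeneous

theorem stmt_3_general (n k d : ℕ) (hn : 1 ≤ n) (hd2 : 2 ≤ d)
    (r m : ℝ) (hm : 0 < m) (hpos : ((n : ℝ) + k) / d + r > 0)
    (α : Fin n →₀ ℕ) (hα : (∑ i, α i) = k)
    (g : MvPolynomial (Fin n) ℝ) (hg : g.IsHomogeneous d)
    (hg_nonneg : ∀ x, 0 ≤ MvPolynomial.eval x g)
    (hint : IntegrableOn (fun x : Fin n → ℝ => ∏ i, x i ^ α i) (G1 g)) :
    ((∫ x, (∏ i, x i ^ α i) * MvPolynomial.eval x g ^ r *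
        Real.exp (-(MvPolynomial.eval x g ^ (1 / m)))) =
      ((n : ℝ) + k) / d * m * Real.Gamma (m * (((n : ℝ) + k) / d + r)) *
        ∫ x in G1 g, ∏ i, x i ^ α i) ∧
    ∀ g' : MvPolynomial (Fin n) ℝ, g'.IsHomogeneous d →
      (∀ x, 0 ≤ MvPolynomial.eval x g') → volume (G1 g') < ⊤ →
      (∫ x, MvPolynomial.eval x g' * Real.exp (-(MvPolynomial.eval x g'))) =
        (n : ℝ) / d * Real.Gamma ((n : ℝ) / d + 1) * (volume (G1 g')).toReal := by
  have hd : d ≠ 0 := by omega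
  have hdim : finrank ℝ (Fin n → ℝ) = n := finrank_fin_fun ℝ
  have hpoly : ∀ {g : MvPolynomial (Fin n) ℝ}, g.IsHomogeneous d →
      IsPosHomogeneous (fun x => MvPolynomial.eval x g) d := fun hg _ _ x => hg.eval_smul _ x
  constructor
  · have hmono : IsPosHomogeneous (fun x : Fin n → ℝ => ∏ i, x i ^ α i) k := fun t _ x => by
      simp only [Finset.prod_smul_apply_pow, hα]
    have h := hmono.integral_mul_rpow_mul_exp_neg_rpow volume (hpoly hg) hd (by omega)
      (by fun_prop) (MvPolynomial.continuous_eval g).measurable hg_nonneg hint hm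
      (by rwa [hdim])
    rwa [hdim] at h
  · intro g' hg' hg'_nonneg hvol
    have hone : IsPosHomogeneous (fun _ : Fin n → ℝ => (1 : ℝ)) 0 := fun _ _ _ => by simp
    have h := hone.integral_mul_rpow_mul_exp_neg_rpow volume (hpoly hg') hd (by omega)
      measurable_const (MvPolynomial.continuous_eval g').measurable hg'_nonneg
      (integrableOn_const hvol.ne) one_pos (r := 1) (by positivity)
    simp only [hdim, one_mul, rpow_one, div_one, CharP.cast_eq_zero, add_zero, setIntegral_const,
      smul_eq_mul, mul_one] at h
    rw [h, measureReal_def]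
    rfl

/-- Lemma 2.1 of the paper: for a nonnegative `d`-homogeneous polynomial `g` with `x^α`
integrable on `G₁(g)`,
`∫ x^α g(x)^r exp(-g(x)^{1/m}) dx = ((n+k)/d)·m·Γ(m((n+k)/d+r))·∫_{G₁(g)} x^α dx`;
in particular `∫ g·exp(-g) dx = (n/d)·Γ(n/d+1)·|G₁(g)|` whenever `|G₁(g)| < ∞`. -/
theorem stmt_3 (n k d : ℕ) (hn : 1 ≤ n) (hd2 : 2 ≤ d) (hd : Even d)
    (r m : ℝ) (hm : 0 < m) (hpos : ((n : ℝ) + k) / d + r > 0)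
    (α : Fin n →₀ ℕ) (hα : (∑ i, α i) = k)
    (g : MvPolynomial (Fin n) ℝ) (hg : g.IsHomogeneous d)
    (hg_nonneg : ∀ x, 0 ≤ MvPolynomial.eval x g)
    (hint : IntegrableOn (fun x : Fin n → ℝ => ∏ i, x i ^ α i) (G1 g)) :
    ((∫ x, (∏ i, x i ^ α i) * MvPolynomial.eval x g ^ r *
        Real.exp (-(MvPolynomial.eval x g ^ (1 / m)))) =
      ((n : ℝ) + k) / d * m * Real.Gamma (m * (((n : ℝ) + k) / d + r)) *
        ∫ x in G1 g, ∏ i, x i ^ α i) ∧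
    ∀ g' : MvPolynomial (Fin n) ℝ, g'.IsHomogeneous d →
      (∀ x, 0 ≤ MvPolynomial.eval x g') → volume (G1 g') < ⊤ →
      (∫ x, MvPolynomial.eval x g' * Real.exp (-(MvPolynomial.eval x g'))) =
        (n : ℝ) / d * Real.Gamma ((n : ℝ) / d + 1) * (volume (G1 g')).toReal :=
  stmt_3_general n k d hn hd2 r m hm hpos α hα g hg hg_nonneg hint
end
end

section
/- Let g(x,y,z) = x⁴ + y⁴ + z⁴ − 2√2·x²yz on ℝ³. Then the set G₁(g) = {(x,y,z) ∈ ℝ³ : g(x,y,z) ≤ 1} is unbounded (it contains the lines {y = z, x = 2^{1/4} y} and {y = z, x = −2^{1/4} y}), yet |G₁(g)| < +∞; equivalently, ∫_{ℝ³} exp(−g(x,y,z)) dx dy dz < +∞. -/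
open MeasureTheory

noncomputable section

/-- The polynomial `g(x,y,z) = x⁴ + y⁴ + z⁴ - 2√2·x²yz` on `ℝ³`. -/
def g8 (p : Fin 3 → ℝ) : ℝ :=
  p 0 ^ 4 + p 1 ^ 4 + p 2 ^ 4 - 2 * Real.sqrt 2 * p 0 ^ 2 * p 1 * p 2

/-!
`g = (x² - √2·yz)² + (y² - z²)²`, so `g` vanishes on the two lines, which makes `G₁(g)`
unbounded. For finiteness of `∫ exp (-g)`, pass to the volume-preserving diagonal coordinates
`y = (u + v)/√2`, `z = (u - v)/√2`; then `g ≥ (x² - u²/√2)² + 3u²v² + v⁴/2`. For fixed `u`, the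
`x`-integral and the `v`-integral of the exponential of minus these terms are both dominated by
Gaussians of width `≍ (1 + u²)^(-1/2)`, so their product is `O((1 + u²)⁻¹)`, which is integrable
in `u`. Finite volume then follows from Markov's inequality.
-/

open Real
open ENNReal (ofReal)

namespace G8

lemma g8_eq_sq_add_sq (x y z : ℝ) :
    g8 ![x, y, z] = (x ^ 2 - √2 * y * z) ^ 2 + (y ^ 2 - z ^ 2) ^ 2 := by
  simp only [g8, Matrix.cons_val_zero, Matrix.cons_val_one, Matrix.cons_val_two,
    Matrix.head_cons, Matrix.tail_cons]
  linear_combination (-(y * z) ^ 2) * sq_sqrt (zero_le_two : (0 : ℝ) ≤ 2)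

lemma g8_eq_zero_of_sq_eq {q : ℝ} (hq : q ^ 2 = √2) (s : ℝ) : g8 ![q * s, s, s] = 0 := by
  rw [g8_eq_sq_add_sq]
  linear_combination s ^ 4 * (q ^ 2 - √2) * hq

lemma two_rpow_quarter_sq : ((2 : ℝ) ^ ((1 : ℝ) / 4)) ^ 2 = √2 := by
  rw [← rpow_natCast, ← rpow_mul zero_le_two, sqrt_eq_rpow]
  norm_num

@[fun_prop]
lemma continuous_g8 : Continuous g8 := by
  unfold g8; fun_prop

lemma not_isBounded_setOf_g8_le_one : ¬ Bornology.IsBounded {p | g8 p ≤ 1} := by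
  intro hb
  refine not_bddAbove_univ (BddAbove.mono (fun s _ => ?_) (hb.image_eval 1).bddAbove)
  refine ⟨![(2 : ℝ) ^ ((1 : ℝ) / 4) * s, s, s], ?_, rfl⟩
  rw [Set.mem_ofPred_eq, g8_eq_zero_of_sq_eq two_rpow_quarter_sq]
  exact zero_le_one

lemma lintegral_exp_neg_mul_sub_sq {b : ℝ} (hb : 0 < b) (m : ℝ) :
    ∫⁻ x, ofReal (exp (-(b * (x - m) ^ 2))) = ofReal √(π / b) := by
  have hint : Integrable fun x : ℝ => exp (-(b * (x - m) ^ 2)) := by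
    simpa [neg_mul] using (integrable_exp_neg_mul_sq hb).comp_sub_right m
  rw [← ofReal_integral_eq_lintegral_ofReal hint (ae_of_all _ fun x => (exp_pos _).le),
    integral_sub_right_eq_self (fun x => exp (-(b * x ^ 2))) m, ← integral_gaussian b]
  simp only [neg_mul]

lemma sq_sub_sq_sq_ge {a x : ℝ} (ha : 0 ≤ a) (hx : 0 ≤ x) :
    ((1 + a ^ 2) * (x - a) ^ 2 - 1 / 4) / 2 ≤ (x ^ 2 - a ^ 2) ^ 2 := by
  have hfac : (x ^ 2 - a ^ 2) ^ 2 = (x - a) ^ 2 * (x + a) ^ 2 := by ring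
  have hplus : (a ^ 2 + (x - a) ^ 2) / 2 ≤ (x + a) ^ 2 := by nlinarith [mul_nonneg ha hx]
  have hquartic : (x - a) ^ 2 - 1 / 4 ≤ ((x - a) ^ 2) ^ 2 := by
    nlinarith [sq_nonneg ((x - a) ^ 2 - 1 / 2)]
  rw [hfac]
  nlinarith [mul_le_mul_of_nonneg_left hplus (sq_nonneg (x - a))]

lemma exp_neg_sq_sub_sq_le {a : ℝ} (ha : 0 ≤ a) (x : ℝ) :
    exp (-(x ^ 2 - a ^ 2) ^ 2) ≤ exp (1 / 8) *
      (exp (-((1 + a ^ 2) / 2 * (x - a) ^ 2)) + exp (-((1 + a ^ 2) / 2 * (x - -a) ^ 2))) := by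
  rw [mul_add, ← exp_add, ← exp_add]
  rcases le_total 0 x with hx | hx
  · have := sq_sub_sq_sq_ge ha hx
    have h := exp_le_exp.mpr
      (show -(x ^ 2 - a ^ 2) ^ 2 ≤ 1 / 8 + -((1 + a ^ 2) / 2 * (x - a) ^ 2) by linarith)
    linarith [exp_pos (1 / 8 + -((1 + a ^ 2) / 2 * (x - -a) ^ 2))]
  · have := sq_sub_sq_sq_ge ha (neg_nonneg.mpr hx)
    have h := exp_le_exp.mpr
      (show -(x ^ 2 - a ^ 2) ^ 2 ≤ 1 / 8 + -((1 + a ^ 2) / 2 * (x - -a) ^ 2) by nlinarith)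
    linarith [exp_pos (1 / 8 + -((1 + a ^ 2) / 2 * (x - a) ^ 2))]

lemma lintegral_exp_neg_sq_sub_sq_le {a : ℝ} (ha : 0 ≤ a) :
    ∫⁻ x, ofReal (exp (-(x ^ 2 - a ^ 2) ^ 2))
      ≤ ofReal (2 * exp (1 / 8) * √(2 * π / (1 + a ^ 2))) := by
  have hb : 0 < (1 + a ^ 2) / 2 := by positivity
  have hwidth : √(π / ((1 + a ^ 2) / 2)) = √(2 * π / (1 + a ^ 2)) := by
    rw [div_div_eq_mul_div, mul_comm]
  calc ∫⁻ x, ofReal (exp (-(x ^ 2 - a ^ 2) ^ 2))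
      ≤ ∫⁻ x, ofReal (exp (1 / 8)) *
          (ofReal (exp (-((1 + a ^ 2) / 2 * (x - a) ^ 2)))
            + ofReal (exp (-((1 + a ^ 2) / 2 * (x - -a) ^ 2)))) := by
        refine lintegral_mono fun x => ?_
        rw [← ENNReal.ofReal_add (exp_pos _).le (exp_pos _).le,
          ← ENNReal.ofReal_mul (exp_pos _).le]
        exact ENNReal.ofReal_le_ofReal (exp_neg_sq_sub_sq_le ha x)
    _ = ofReal (2 * exp (1 / 8) * √(2 * π / (1 + a ^ 2))) := by
        rw [lintegral_const_mul' _ _ ENNReal.ofReal_ne_top, lintegral_add_left (by fun_prop),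
          lintegral_exp_neg_mul_sub_sq hb, lintegral_exp_neg_mul_sub_sq hb, hwidth,
          ← ENNReal.ofReal_add (by positivity) (by positivity),
          ← ENNReal.ofReal_mul (exp_pos _).le]
        ring_nf

lemma lintegral_exp_neg_mul_sq_add_pow_four_le {b : ℝ} (hb : 0 ≤ b) :
    ∫⁻ v, ofReal (exp (-(b * v ^ 2 + v ^ 4 / 2)))
      ≤ ofReal (exp (1 / 2) * √(π / (1 + b))) := by
  calc ∫⁻ v, ofReal (exp (-(b * v ^ 2 + v ^ 4 / 2)))
      ≤ ∫⁻ v, ofReal (exp (1 / 2)) * ofReal (exp (-((1 + b) * (v - 0) ^ 2))) := by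
        refine lintegral_mono fun v => ?_
        rw [← ENNReal.ofReal_mul (exp_pos _).le, ← exp_add]
        exact ENNReal.ofReal_le_ofReal (exp_le_exp.mpr (by nlinarith [sq_nonneg (v ^ 2 - 1)]))
    _ = ofReal (exp (1 / 2) * √(π / (1 + b))) := by
        rw [lintegral_const_mul' _ _ ENNReal.ofReal_ne_top,
          lintegral_exp_neg_mul_sub_sq (by positivity), ← ENNReal.ofReal_mul (exp_pos _).le]

lemma sqrt_mul_sqrt_le_div_one_add_sq (u : ℝ) :
    √(π / (1 + 3 * u ^ 2)) * √(2 * π / (1 + u ^ 2 / √2)) ≤ 2 * π / (1 + u ^ 2) := by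
  have hs : √2 ≤ 2 := by rw [sqrt_le_left zero_le_two]; norm_num
  have h1 : (1 + u ^ 2) / 2 ≤ 1 + u ^ 2 / √2 := by
    have : u ^ 2 / 2 ≤ u ^ 2 / √2 := div_le_div_of_nonneg_left (sq_nonneg u) (by positivity) hs
    linarith
  have h3 : 1 + u ^ 2 ≤ 1 + 3 * u ^ 2 := by nlinarith [sq_nonneg u]
  have hprod := mul_le_mul h3 h1 (by positivity) (by positivity)
  rw [← sqrt_mul (by positivity), sqrt_le_left (by positivity), div_pow,
    div_mul_div_comm, div_le_div_iff₀ (by positivity) (by positivity)]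
  nlinarith [mul_le_mul_of_nonneg_left hprod (by positivity : (0 : ℝ) ≤ 4 * π ^ 2)]

def diagCoordsMatrix : Matrix (Fin 3) (Fin 3) ℝ :=
  !![0, 0, 1; (√2)⁻¹, (√2)⁻¹, 0; (√2)⁻¹, -(√2)⁻¹, 0]

lemma det_diagCoordsMatrix : diagCoordsMatrix.det = -1 := by
  have h : (√2)⁻¹ * (√2)⁻¹ = (1 / 2 : ℝ) := by
    rw [← mul_inv, mul_self_sqrt zero_le_two, one_div]
  rw [diagCoordsMatrix, Matrix.det_fin_three]
  simp only [Matrix.of_apply, Matrix.cons_val', Matrix.cons_val_zero, Matrix.cons_val_one,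
    Matrix.cons_val_two, Matrix.cons_val_fin_one, Matrix.tail_cons, Matrix.vecHead]
  linear_combination (-2) * h

lemma measurePreserving_toLin'_diagCoordsMatrix :
    MeasurePreserving (Matrix.toLin' diagCoordsMatrix) := by
  refine ⟨(Matrix.toLin' diagCoordsMatrix).continuous_of_finiteDimensional.measurable, ?_⟩
  rw [Real.map_linearMap_volume_pi_eq_smul_volume_pi (by simp [det_diagCoordsMatrix]),
    LinearMap.det_toLin', det_diagCoordsMatrix]
  simp

def piFinThreeEquiv : (Fin 3 → ℝ) ≃ᵐ ℝ × ℝ × ℝ :=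
  (MeasurableEquiv.piFinSuccAbove (fun _ => ℝ) 0).trans
    ((MeasurableEquiv.refl ℝ).prodCongr MeasurableEquiv.finTwoArrow)

lemma measurePreserving_piFinThreeEquiv : MeasurePreserving piFinThreeEquiv :=
  ((MeasurePreserving.id volume).prod (volume_preserving_finTwoArrow ℝ)).comp
    (volume_preserving_piFinSuccAbove (fun _ => ℝ) 0)

lemma piFinThreeEquiv_symm_apply (u v x : ℝ) : piFinThreeEquiv.symm (u, v, x) = ![u, v, x] := by
  ext i
  fin_cases i <;> rfl

def diagCoords (q : ℝ × ℝ × ℝ) : Fin 3 → ℝ :=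
  Matrix.toLin' diagCoordsMatrix (piFinThreeEquiv.symm q)

lemma measurePreserving_diagCoords : MeasurePreserving diagCoords :=
  measurePreserving_toLin'_diagCoordsMatrix.comp measurePreserving_piFinThreeEquiv.symm

lemma diagCoords_apply (u v x : ℝ) :
    diagCoords (u, v, x) = ![x, (u + v) / √2, (u - v) / √2] := by
  rw [diagCoords, piFinThreeEquiv_symm_apply, Matrix.toLin'_apply, diagCoordsMatrix]
  ext i
  fin_cases i <;>
    simp only [Matrix.mulVec, Matrix.vec3_dotProduct, Matrix.of_apply, Matrix.cons_val',
      Matrix.cons_val_fin_one, Matrix.cons_val_zero, Matrix.cons_val_one, Matrix.cons_val_two,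
      Matrix.tail_cons, Matrix.vecHead, Fin.zero_eta, Fin.mk_one, Fin.reduceFinMk, Fin.isValue] <;>
    ring

lemma g8_diagCoords_ge (u v x : ℝ) :
    (x ^ 2 - u ^ 2 / √2) ^ 2 + (3 * u ^ 2 * v ^ 2 + v ^ 4 / 2) ≤ g8 (diagCoords (u, v, x)) := by
  have hs : √2 ^ 2 = 2 := sq_sqrt zero_le_two
  have hyz : √2 * ((u + v) / √2) * ((u - v) / √2) = u ^ 2 / √2 - v ^ 2 / √2 := by
    field_simp; ring
  have hyz' : ((u + v) / √2) ^ 2 - ((u - v) / √2) ^ 2 = 2 * u * v := by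
    field_simp; linear_combination (-2 * u * v) * hs
  have hcross : v ^ 2 / √2 * (u ^ 2 / √2) = u ^ 2 * v ^ 2 / 2 := by
    field_simp; linear_combination (-u ^ 2 * v ^ 2) * hs
  have hv4 : (v ^ 2 / √2) ^ 2 = v ^ 4 / 2 := by
    rw [div_pow, hs]; ring
  have hxv : 0 ≤ v ^ 2 / √2 * x ^ 2 := by positivity
  rw [diagCoords_apply, g8_eq_sq_add_sq, hyz, hyz']
  -- expanding `(x² - u²/√2 + v²/√2)²`, the only term not accounted for is `2·(v²/√2)·x² ≥ 0`
  nlinarith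

lemma lintegral_mul_lintegral_le_inv_one_add_sq (u : ℝ) :
    (∫⁻ v, ofReal (exp (-(3 * u ^ 2 * v ^ 2 + v ^ 4 / 2)))) *
        ∫⁻ x, ofReal (exp (-(x ^ 2 - u ^ 2 / √2) ^ 2))
      ≤ ofReal (4 * π * exp (5 / 8) * (1 + u ^ 2)⁻¹) := by
  have hV := lintegral_exp_neg_mul_sq_add_pow_four_le (by positivity : 0 ≤ 3 * u ^ 2)
  have hJ := lintegral_exp_neg_sq_sub_sq_le (sqrt_nonneg (u ^ 2 / √2))
  rw [sq_sqrt (by positivity)] at hJ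
  refine (mul_le_mul' hV hJ).trans ?_
  rw [← ENNReal.ofReal_mul (by positivity)]
  refine ENNReal.ofReal_le_ofReal ?_
  calc exp (1 / 2) * √(π / (1 + 3 * u ^ 2)) * (2 * exp (1 / 8) * √(2 * π / (1 + u ^ 2 / √2)))
      = 2 * (exp (1 / 2) * exp (1 / 8)) *
          (√(π / (1 + 3 * u ^ 2)) * √(2 * π / (1 + u ^ 2 / √2))) := by ring
    _ ≤ 2 * (exp (1 / 2) * exp (1 / 8)) * (2 * π / (1 + u ^ 2)) := by
        gcongr; exact sqrt_mul_sqrt_le_div_one_add_sq u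
    _ = 4 * π * exp (5 / 8) * (1 + u ^ 2)⁻¹ := by rw [← exp_add]; norm_num; ring

lemma lintegral_exp_neg_g8_lt_top : ∫⁻ p, ofReal (exp (-g8 p)) < ⊤ := by
  calc ∫⁻ p, ofReal (exp (-g8 p))
      = ∫⁻ q, ofReal (exp (-g8 (diagCoords q))) :=
        (measurePreserving_diagCoords.lintegral_comp (by fun_prop)).symm
    _ ≤ ∫⁻ q : ℝ × ℝ × ℝ, ofReal (exp (-(3 * q.1 ^ 2 * q.2.1 ^ 2 + q.2.1 ^ 4 / 2)))
          * ofReal (exp (-(q.2.2 ^ 2 - q.1 ^ 2 / √2) ^ 2)) := by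
        refine lintegral_mono fun ⟨u, v, x⟩ => ?_
        rw [← ENNReal.ofReal_mul (exp_pos _).le, ← exp_add]
        exact ENNReal.ofReal_le_ofReal (exp_le_exp.mpr (by linarith [g8_diagCoords_ge u v x]))
    _ = ∫⁻ u, (∫⁻ v, ofReal (exp (-(3 * u ^ 2 * v ^ 2 + v ^ 4 / 2)))) *
          ∫⁻ x, ofReal (exp (-(x ^ 2 - u ^ 2 / √2) ^ 2)) := by
        rw [Measure.volume_eq_prod, lintegral_prod _ (by fun_prop)]
        refine lintegral_congr fun u => ?_
        rw [Measure.volume_eq_prod]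
        exact lintegral_prod_mul (f := fun v => ofReal (exp (-(3 * u ^ 2 * v ^ 2 + v ^ 4 / 2))))
          (g := fun x => ofReal (exp (-(x ^ 2 - u ^ 2 / √2) ^ 2))) (by fun_prop) (by fun_prop)
    _ ≤ ∫⁻ u, ofReal (4 * π * exp (5 / 8) * (1 + u ^ 2)⁻¹) :=
        lintegral_mono lintegral_mul_lintegral_le_inv_one_add_sq
    _ < ⊤ := (integrable_inv_one_add_sq.const_mul _).lintegral_lt_top

lemma integrable_exp_neg_g8 : Integrable fun p => exp (-g8 p) :=
  ⟨by fun_prop, (hasFiniteIntegral_iff_ofReal (ae_of_all _ fun _ => (exp_pos _).le)).mpr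
    lintegral_exp_neg_g8_lt_top⟩

lemma volume_setOf_g8_le_one_lt_top : volume {p | g8 p ≤ 1} < ⊤ := by
  refine lt_of_le_of_lt (measure_mono fun p (hp : g8 p ≤ 1) => ?_)
    (integrable_exp_neg_g8.measure_norm_ge_lt_top (exp_pos (-1)))
  simp only [Set.mem_ofPred_eq, norm_of_nonneg (exp_pos _).le, exp_le_exp]
  linarith

end G8

open G8 in
/-- Lemma 2.3 (4) of the paper (the key example): `G₁(g)` for
`g(x,y,z) = x⁴+y⁴+z⁴-2√2 x²yz` contains the lines `{y = z, x = ±2^{1/4}y}`, hence it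
is unbounded, yet it has finite volume; equivalently `∫ exp(-g) < ∞`. -/
theorem stmt_8 :
    (∀ s : ℝ, g8 ![(2 : ℝ) ^ ((1 : ℝ) / 4) * s, s, s] ≤ 1 ∧
      g8 ![-((2 : ℝ) ^ ((1 : ℝ) / 4)) * s, s, s] ≤ 1) ∧
    ¬ Bornology.IsBounded {p : Fin 3 → ℝ | g8 p ≤ 1} ∧
    volume {p : Fin 3 → ℝ | g8 p ≤ 1} < ⊤ ∧
    Integrable (fun p : Fin 3 → ℝ => Real.exp (-g8 p)) := by
  have hneg : (-(2 : ℝ) ^ ((1 : ℝ) / 4)) ^ 2 = √2 := by rw [neg_sq, two_rpow_quarter_sq]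
  exact ⟨fun s => ⟨(g8_eq_zero_of_sq_eq two_rpow_quarter_sq s).trans_le zero_le_one,
      (g8_eq_zero_of_sq_eq hneg s).trans_le zero_le_one⟩,
    not_isBounded_setOf_g8_le_one, volume_setOf_g8_le_one_lt_top, integrable_exp_neg_g8⟩
end
end

section
/- Let d ≥ 6 be an even integer and let g(x,y) = (x² − y²)²·(x^{d−4} + y^{d−4}) on ℝ². Then g is a homogeneous polynomial of degree d with |G₁(g)| < +∞, but G₁(g) = {(x,y) : g(x,y) ≤ 1} is unbounded, since it contains the lines y = x and y = −x. Moreover, for every t < 1 the polynomial g(x,y) − (1−t)x^d takes negative values (for x = y), hence has |G₁(·)| = +∞; consequently the set 𝔽_d(ℝ²) of homogeneous degree-d polynomials on ℝ² with finite sublevel-set volume is not open. -/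
/-! For `|x| ≥ 1` the factor `x^{d-4} + y^{d-4}` is at least `x²`, so `g(x,y) ≤ 1` forces
`|x² - y²|·|x| ≤ 1`, which puts `y` within `1/x²` of `±x`; with the same bound for `|y| ≥ 1`,
every vertical slice of `G₁(g)` has length `O(1/(1 + x²))`, an integrable function of `x`.
For `c > 0` the homogeneous polynomial `g - c x^d` is negative at `(1,1)`, hence on a nonempty
open cone, and such a cone has infinite measure because it contains its own dilate by `2`.
Letting `c → 0` shows that `g` is a limit of polynomials outside `𝔽_d(ℝ²)`. -/

open MeasureTheory

noncomputable section

/-- The polynomial `g(x,y) = (x² - y²)²(x^{d-4} + y^{d-4})` on `ℝ²`. -/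
def g9 (d : ℕ) : MvPolynomial (Fin 2) ℝ :=
  (MvPolynomial.X 0 ^ 2 - MvPolynomial.X 1 ^ 2) ^ 2 *
    (MvPolynomial.X 0 ^ (d - 4) + MvPolynomial.X 1 ^ (d - 4))

open Set MvPolynomial
open scoped Pointwise

theorem MvPolynomial.IsHomogeneous.eval_smul_s9 {σ R : Type*} [CommSemiring R]
    {φ : MvPolynomial σ R} {n : ℕ} (hφ : φ.IsHomogeneous n) (r : R) (x : σ → R) :
    eval (r • x) φ = r ^ n * eval x φ := by
  rw [eval_eq, eval_eq, Finset.mul_sum]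
  refine Finset.sum_congr rfl fun e he => ?_
  have hdeg : ∑ i ∈ e.support, e i = n := by
    simpa [Finsupp.weight_apply, Finsupp.sum] using hφ (mem_support_iff.mp he)
  simp only [Pi.smul_apply, smul_eq_mul, mul_pow, Finset.prod_mul_distrib,
    Finset.prod_pow_eq_pow_sum, hdeg]
  ring

theorem MvPolynomial.abs_coeff_sub_C_mul_X_pow_sub_coeff_le {σ : Type*} [DecidableEq σ]
    (g : MvPolynomial σ ℝ) (c : ℝ) (i : σ) (k : ℕ) (α : σ →₀ ℕ) :
    |(g - C c * X i ^ k).coeff α - g.coeff α| ≤ |c| := by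
  rw [coeff_sub, coeff_C_mul, coeff_X_pow, sub_sub_cancel_left, abs_neg]
  split_ifs <;> simp

theorem MeasureTheory.Measure.addHaar_eq_top_of_smul_subset {E : Type*} [NormedAddCommGroup E]
    [NormedSpace ℝ E] [MeasurableSpace E] [BorelSpace E] [FiniteDimensional ℝ E] [Nontrivial E]
    (μ : Measure E) [μ.IsAddHaarMeasure] {U : Set E} (hU : IsOpen U) (hne : U.Nonempty)
    {r : ℝ} (hr : 1 < r) (hsub : r • U ⊆ U) : μ U = ⊤ := by
  by_contra hfin
  have hpos : μ U ≠ 0 := (hU.measure_pos μ hne).ne'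
  have hscale : ENNReal.ofReal (r ^ Module.finrank ℝ E) * μ U ≤ 1 * μ U := by
    rw [one_mul, ← abs_of_pos (pow_pos (zero_lt_one.trans hr) _), ← μ.addHaar_smul]
    exact measure_mono hsub
  have hle := (ENNReal.mul_le_mul_iff_left hpos hfin).mp hscale
  rw [ENNReal.ofReal_le_one] at hle
  exact (one_lt_pow₀ hr Module.finrank_pos.ne').not_ge hle

theorem volume_G1_eq_top_of_eval_neg {n d : ℕ} [NeZero n] {p : MvPolynomial (Fin n) ℝ}
    (hp : p.IsHomogeneous d) {v : Fin n → ℝ} (hv : eval v p < 0) : volume (G1 p) = ⊤ := by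
  set U := {x : Fin n → ℝ | eval x p < 0}
  have hcone : (2 : ℝ) • U ⊆ U := by
    rintro _ ⟨x, hx, rfl⟩
    change eval ((2 : ℝ) • x) p < 0
    rw [hp.eval_smul_s9]
    exact mul_neg_of_pos_of_neg (by positivity) hx
  have hU := volume.addHaar_eq_top_of_smul_subset (isOpen_lt (continuous_eval p) continuous_const)
    ⟨v, hv⟩ one_lt_two hcone
  exact top_le_iff.mp (hU ▸ measure_mono fun x (hx : eval x p < 0) => (hx.trans one_pos).le)

theorem MeasureTheory.Measure.prod_lt_top_of_measure_slice_le {α β : Type*} [MeasurableSpace α]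
    [MeasurableSpace β] {μ : Measure α} {ν : Measure β} [SFinite ν] {s : Set (α × β)}
    (hs : MeasurableSet s) {f : α → ℝ} (hf : Integrable f μ)
    (h : ∀ x, ν (Prod.mk x ⁻¹' s) ≤ ENNReal.ofReal (f x)) : μ.prod ν s < ⊤ :=
  calc μ.prod ν s = ∫⁻ x, ν (Prod.mk x ⁻¹' s) ∂μ := Measure.prod_apply hs
    _ ≤ ∫⁻ x, ENNReal.ofReal (f x) ∂μ := lintegral_mono h
    _ < ⊤ := hf.lintegral_lt_top

theorem sq_sub_sq_sq_mul_sq_le_one {m : ℕ} (hm : 2 ≤ m) (hme : Even m) {x y : ℝ} (hx : 1 ≤ |x|)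
    (h : (x ^ 2 - y ^ 2) ^ 2 * (x ^ m + y ^ m) ≤ 1) : (x ^ 2 - y ^ 2) ^ 2 * x ^ 2 ≤ 1 := by
  have hxm : x ^ 2 ≤ x ^ m := by
    rw [← sq_abs, ← hme.pow_abs]
    exact pow_le_pow_right₀ hx hm
  nlinarith [sq_nonneg (x ^ 2 - y ^ 2), hme.pow_nonneg y]

theorem abs_sub_le_or_abs_add_le_of_sq_sub_sq_sq_mul_sq_le_one {x y : ℝ} (hx : 1 ≤ |x|)
    (h : (x ^ 2 - y ^ 2) ^ 2 * x ^ 2 ≤ 1) : |y - x| ≤ 1 / x ^ 2 ∨ |y + x| ≤ 1 / x ^ 2 := by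
  have hx2 : 0 < x ^ 2 := by rw [← sq_abs]; positivity
  have hprod : |y - x| * |y + x| * |x| ≤ 1 := by
    rw [← abs_mul, ← abs_mul, ← sq_le_one_iff_abs_le_one]
    linarith [show ((y - x) * (y + x) * x) ^ 2 = (x ^ 2 - y ^ 2) ^ 2 * x ^ 2 by ring]
  have htri : 2 * |x| ≤ |y - x| + |y + x| := by
    have := abs_sub (y + x) (y - x)
    rw [show y + x - (y - x) = 2 * x by ring, abs_mul, abs_two] at this
    linarith
  have hsq : |x| * |x| = x ^ 2 := by rw [← sq, sq_abs]
  rw [le_div_iff₀ hx2, le_div_iff₀ hx2, ← hsq]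
  rcases le_total |y - x| |y + x| with hle | hle
  · left
    nlinarith [abs_nonneg x, abs_nonneg (y - x)]
  · right
    nlinarith [abs_nonneg x, abs_nonneg (y + x)]

theorem abs_le_abs_add_one_of_sq_sub_sq_sq_mul_add_pow_le_one {m : ℕ} (hm : 2 ≤ m) (hme : Even m)
    {x y : ℝ} (h : (x ^ 2 - y ^ 2) ^ 2 * (x ^ m + y ^ m) ≤ 1) : |y| ≤ |x| + 1 := by
  by_cases hy : 1 ≤ |y|
  · have h' : (y ^ 2 - x ^ 2) ^ 2 * (y ^ m + x ^ m) ≤ 1 := by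
      convert h using 1
      ring
    have hr : 1 / y ^ 2 ≤ 1 := by
      rw [div_le_one (by rw [← sq_abs]; positivity), ← sq_abs]
      nlinarith
    have h1 := abs_sub_abs_le_abs_sub y x
    have h2 := abs_sub_abs_le_abs_sub y (-x)
    rw [abs_neg, sub_neg_eq_add] at h2
    rcases abs_sub_le_or_abs_add_le_of_sq_sub_sq_sq_mul_sq_le_one hy
      (sq_sub_sq_sq_mul_sq_le_one hm hme hy h') with h3 | h3
    · rw [abs_sub_comm] at h3
      linarith
    · rw [add_comm] at h3
      linarith
  · linarith [abs_nonneg x]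

theorem volume_setOf_sq_sub_sq_sq_mul_add_pow_le_one_le {m : ℕ} (hm : 2 ≤ m) (hme : Even m)
    (x : ℝ) :
    volume {y : ℝ | (x ^ 2 - y ^ 2) ^ 2 * (x ^ m + y ^ m) ≤ 1} ≤
      ENNReal.ofReal (8 * (1 + x ^ 2)⁻¹) := by
  rcases le_or_gt 1 |x| with hx | hx
  · have hx2 : 1 ≤ x ^ 2 := by rw [← sq_abs]; nlinarith
    have hsub : {y : ℝ | (x ^ 2 - y ^ 2) ^ 2 * (x ^ m + y ^ m) ≤ 1} ⊆
        Metric.closedBall x (1 / x ^ 2) ∪ Metric.closedBall (-x) (1 / x ^ 2) := fun y hy => by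
      simpa only [mem_union, Metric.mem_closedBall, Real.dist_eq, sub_neg_eq_add] using
        abs_sub_le_or_abs_add_le_of_sq_sub_sq_sq_mul_sq_le_one hx
          (sq_sub_sq_sq_mul_sq_le_one hm hme hx hy)
    calc _ ≤ volume (Metric.closedBall x (1 / x ^ 2) ∪ Metric.closedBall (-x) (1 / x ^ 2)) :=
          measure_mono hsub
      _ ≤ volume (Metric.closedBall x (1 / x ^ 2)) + volume (Metric.closedBall (-x) (1 / x ^ 2)) :=
          measure_union_le _ _
      _ = ENNReal.ofReal (4 / x ^ 2) := by
          rw [Real.volume_closedBall, Real.volume_closedBall,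
            ← ENNReal.ofReal_add (by positivity) (by positivity)]
          ring_nf
      _ ≤ ENNReal.ofReal (8 * (1 + x ^ 2)⁻¹) := by
          gcongr
          rw [← div_eq_mul_inv, div_le_div_iff₀ (by positivity) (by positivity)]
          linarith
  · have hsub : {y : ℝ | (x ^ 2 - y ^ 2) ^ 2 * (x ^ m + y ^ m) ≤ 1} ⊆ Metric.closedBall 0 2 :=
      fun y hy => by
        rw [Metric.mem_closedBall, dist_zero_right, Real.norm_eq_abs]
        linarith [abs_le_abs_add_one_of_sq_sub_sq_sq_mul_add_pow_le_one hm hme hy]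
    calc _ ≤ volume (Metric.closedBall (0 : ℝ) 2) := measure_mono hsub
      _ = ENNReal.ofReal 4 := by rw [Real.volume_closedBall]; norm_num
      _ ≤ ENNReal.ofReal (8 * (1 + x ^ 2)⁻¹) := by
          gcongr
          rw [← div_eq_mul_inv, le_div_iff₀ (by positivity)]
          nlinarith [abs_nonneg x, sq_abs x]

theorem volume_setOf_sq_sub_sq_sq_mul_add_pow_le_one_lt_top {m : ℕ} (hm : 2 ≤ m)
    (hme : Even m) :
    volume {p : ℝ × ℝ | (p.1 ^ 2 - p.2 ^ 2) ^ 2 * (p.1 ^ m + p.2 ^ m) ≤ 1} < ⊤ :=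
  Measure.prod_lt_top_of_measure_slice_le (isClosed_le (by fun_prop) continuous_const).measurableSet
    (integrable_inv_one_add_sq.const_mul 8) (volume_setOf_sq_sub_sq_sq_mul_add_pow_le_one_le hm hme)

theorem eval_g9 (d : ℕ) (x : Fin 2 → ℝ) :
    eval x (g9 d) = (x 0 ^ 2 - x 1 ^ 2) ^ 2 * (x 0 ^ (d - 4) + x 1 ^ (d - 4)) := by
  simp [g9]

theorem isHomogeneous_g9 {d : ℕ} (hd : 4 ≤ d) : (g9 d).IsHomogeneous d := by
  have h := ((((isHomogeneous_X_pow (0 : Fin 2) 2).sub (isHomogeneous_X_pow 1 2)).pow 2).mul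
    ((isHomogeneous_X_pow (R := ℝ) (0 : Fin 2) (d - 4)).add (isHomogeneous_X_pow 1 (d - 4))))
  rwa [show 2 * 2 + (d - 4) = d by omega] at h

theorem lines_subset_G1_g9 (d : ℕ) (s : ℝ) :
    (![s, s] : Fin 2 → ℝ) ∈ G1 (g9 d) ∧ (![s, -s] : Fin 2 → ℝ) ∈ G1 (g9 d) := by
  constructor <;> simp [G1, eval_g9]

theorem not_isBounded_G1_g9 (d : ℕ) : ¬ Bornology.IsBounded (G1 (g9 d)) := by
  intro hb
  obtain ⟨C, hC⟩ := isBounded_iff_forall_norm_le.mp hb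
  have h := (norm_le_pi_norm (![|C| + 1, |C| + 1] : Fin 2 → ℝ) 0).trans
    (hC _ (lines_subset_G1_g9 d (|C| + 1)).1)
  rw [Matrix.cons_val_zero, Real.norm_eq_abs, abs_of_pos (by positivity)] at h
  linarith [le_abs_self C]

theorem volume_G1_g9_lt_top {d : ℕ} (hd6 : 6 ≤ d) (hd : Even d) : volume (G1 (g9 d)) < ⊤ := by
  have hG1 : G1 (g9 d) = MeasurableEquiv.finTwoArrow ⁻¹'
      {p : ℝ × ℝ | (p.1 ^ 2 - p.2 ^ 2) ^ 2 * (p.1 ^ (d - 4) + p.2 ^ (d - 4)) ≤ 1} := by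
    ext x
    simp [G1, eval_g9, MeasurableEquiv.finTwoArrow]
  rw [hG1, (volume_preserving_finTwoArrow ℝ).measure_preimage
    (isClosed_le (by fun_prop) continuous_const).measurableSet.nullMeasurableSet]
  exact volume_setOf_sq_sub_sq_sq_mul_add_pow_le_one_lt_top (by omega) (hd.tsub (by decide))

theorem isHomogeneous_g9_sub_C_mul_X_pow {d : ℕ} (hd : 4 ≤ d) (c : ℝ) :
    (g9 d - C c * X 0 ^ d).IsHomogeneous d :=
  (isHomogeneous_g9 hd).sub (isHomogeneous_C_mul_X_pow c 0 d)

theorem eval_g9_sub_C_mul_X_pow_neg (d : ℕ) {c : ℝ} (hc : 0 < c) :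
    eval ![1, 1] (g9 d - C c * X 0 ^ d) < 0 := by
  simpa [eval_g9] using hc

theorem volume_G1_g9_sub_C_mul_X_pow {d : ℕ} (hd : 4 ≤ d) {c : ℝ} (hc : 0 < c) :
    volume (G1 (g9 d - C c * X 0 ^ d)) = ⊤ :=
  volume_G1_eq_top_of_eval_neg (isHomogeneous_g9_sub_C_mul_X_pow hd c)
    (eval_g9_sub_C_mul_X_pow_neg d hc)

/-- Lemma 2.3 (5) of the paper: for even `d ≥ 6`, `g(x,y) = (x²-y²)²(x^{d-4}+y^{d-4})` is
`d`-homogeneous with `|G₁(g)| < ∞`, but `G₁(g)` contains the lines `y = ±x` and is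
unbounded; moreover for every `t < 1` the polynomial `g - (1-t)x^d` takes negative values
(for `x = y`) and has infinite sublevel-set volume, so `𝔽_d(ℝ²)` is not open. -/
theorem stmt_9 (d : ℕ) (hd6 : 6 ≤ d) (hd : Even d) :
    (g9 d).IsHomogeneous d ∧
    volume (G1 (g9 d)) < ⊤ ∧
    (∀ s : ℝ, (![s, s] : Fin 2 → ℝ) ∈ G1 (g9 d) ∧ (![s, -s] : Fin 2 → ℝ) ∈ G1 (g9 d)) ∧
    ¬ Bornology.IsBounded (G1 (g9 d)) ∧
    (∀ t : ℝ, t < 1 →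
      (∃ s : ℝ, MvPolynomial.eval (![s, s] : Fin 2 → ℝ)
        (g9 d - MvPolynomial.C (1 - t) * MvPolynomial.X 0 ^ d) < 0) ∧
      volume (G1 (g9 d - MvPolynomial.C (1 - t) * MvPolynomial.X 0 ^ d)) = ⊤) ∧
    ¬ (∀ g₁ : MvPolynomial (Fin 2) ℝ, g₁.IsHomogeneous d → volume (G1 g₁) < ⊤ →
        ∃ ε > (0 : ℝ), ∀ g₂ : MvPolynomial (Fin 2) ℝ, g₂.IsHomogeneous d →
          (∀ α, |g₂.coeff α - g₁.coeff α| < ε) → volume (G1 g₂) < ⊤) := by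
  have hd4 : 4 ≤ d := by omega
  refine ⟨isHomogeneous_g9 hd4, volume_G1_g9_lt_top hd6 hd, lines_subset_G1_g9 d,
    not_isBounded_G1_g9 d, fun t ht => ⟨⟨1, eval_g9_sub_C_mul_X_pow_neg d (by linarith)⟩,
      volume_G1_g9_sub_C_mul_X_pow hd4 (by linarith)⟩, fun hopen => ?_⟩
  obtain ⟨ε, hε, hnear⟩ := hopen (g9 d) (isHomogeneous_g9 hd4) (volume_G1_g9_lt_top hd6 hd)
  have hclose : ∀ α, |(g9 d - C (ε / 2) * X 0 ^ d).coeff α - (g9 d).coeff α| < ε := fun α =>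
    (abs_coeff_sub_C_mul_X_pow_sub_coeff_le _ _ _ _ α).trans_lt
      (by rw [abs_of_pos (half_pos hε)]; exact half_lt_self hε)
  have hfin := hnear _ (isHomogeneous_g9_sub_C_mul_X_pow hd4 _) hclose
  rw [volume_G1_g9_sub_C_mul_X_pow hd4 (half_pos hε)] at hfin
  exact lt_irrefl _ hfin
end
end

section
/- Let f : ℝⁿ → [0,+∞) be a log-concave function with ‖f‖_∞ = f(0) = 1. Then for every 1 < t₀ < t₁ one has (log t₀)·H_{t₀}(f) ⊆ (log t₁)·H_{t₁}(f), where H_t(f) = ⋃_{λ∈(0,1)} (log(t/λ))^{−1}·K_λ(f) and K_λ(f) = {x ∈ ℝⁿ : f(x) ≥ λ}. -/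
open MeasureTheory Pointwise

noncomputable section

/-- Lemma 3.3 of the paper: for a log-concave `f` with `‖f‖_∞ = f 0 = 1` and `1 < t₀ < t₁`,
`(log t₀)·H_{t₀}(f) ⊆ (log t₁)·H_{t₁}(f)`, where
`H_t(f) = ⋃_{λ∈(0,1)} (log(t/λ))⁻¹·K_λ(f)` and `K_λ(f) = {x : f x ≥ λ}`. -/
theorem stmt_12 (n : ℕ)
    (f : (Fin n → ℝ) → ℝ) (hf_nonneg : ∀ x, 0 ≤ f x)
    (hf_lc : ∀ x y : Fin n → ℝ, ∀ θ : ℝ, 0 ≤ θ → θ ≤ 1 →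
      f x ^ (1 - θ) * f y ^ θ ≤ f ((1 - θ) • x + θ • y))
    (hf_le : ∀ x, f x ≤ 1) (hf0 : f 0 = 1)
    (t₀ t₁ : ℝ) (ht₀ : 1 < t₀) (ht₁ : t₀ < t₁) :
    Real.log t₀ • (⋃ l ∈ Set.Ioo (0 : ℝ) 1, (Real.log (t₀ / l))⁻¹ • {x : Fin n → ℝ | l ≤ f x}) ⊆
      Real.log t₁ • (⋃ l ∈ Set.Ioo (0 : ℝ) 1, (Real.log (t₁ / l))⁻¹ • {x : Fin n → ℝ | l ≤ f x}) := by
  intro z hz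
  obtain ⟨s, hs, rfl⟩ := hz
  simp only [Set.mem_iUnion] at hs
  obtain ⟨l, ⟨hl0, hl1⟩, hs⟩ := hs
  obtain ⟨x, hx, rfl⟩ := hs
  have hlt₀ : 0 < Real.log t₀ := Real.log_pos ht₀
  have hlt₁ : 0 < Real.log t₁ := Real.log_pos (ht₀.trans ht₁)
  have hll : Real.log l < 0 := Real.log_neg hl0 hl1
  set r : ℝ := Real.log t₁ / Real.log t₀ with hr
  have hr1 : 1 ≤ r := (one_le_div hlt₀).2 (Real.log_le_log (by linarith) ht₁.le)
  have hr0 : 0 < r := lt_of_lt_of_le one_pos hr1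
  set m : ℝ := l ^ r with hm
  have hm0 : 0 < m := Real.rpow_pos_of_pos hl0 r
  have hm1 : m < 1 := Real.rpow_lt_one hl0.le hl1 hr0
  have hml : m ≤ l := by
    calc m ≤ l ^ (1:ℝ) := Real.rpow_le_rpow_of_exponent_ge hl0 hl1.le hr1
    _ = l := Real.rpow_one l
  have hlogm : Real.log m = r * Real.log l := Real.log_rpow hl0 r
  have hd₀ : Real.log (t₀ / l) = Real.log t₀ - Real.log l :=
    Real.log_div (by linarith) (ne_of_gt hl0)
  have hd₁ : Real.log (t₁ / m) = Real.log t₁ - Real.log m :=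
    Real.log_div (by linarith) (ne_of_gt hm0)
  refine ⟨(Real.log (t₁ / m))⁻¹ • x, ?_, ?_⟩
  · simp only [Set.mem_iUnion]
    exact ⟨m, ⟨hm0, hm1⟩, x, le_trans hml hx, rfl⟩
  · show Real.log t₁ • (Real.log (t₁ / m))⁻¹ • x = Real.log t₀ • (Real.log (t₀ / l))⁻¹ • x
    rw [smul_smul, smul_smul]
    congr 1
    rw [hd₀, hd₁, hlogm, hr]
    have h1 : Real.log t₀ - Real.log l ≠ 0 := by linarith
    have h2 : Real.log t₀ ≠ 0 := ne_of_gt hlt₀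
    have h4 : Real.log t₁ ≠ 0 := ne_of_gt hlt₁
    have key : Real.log t₁ - Real.log t₁ / Real.log t₀ * Real.log l =
        (Real.log t₁ / Real.log t₀) * (Real.log t₀ - Real.log l) := by
      field_simp
    rw [key, mul_inv, inv_div, ← mul_assoc, mul_comm (Real.log t₁), div_mul_cancel₀ _ h4]
end
end

section
/- Let f : ℝⁿ → [0,+∞) be an integrable log-concave function with ‖f‖_∞ = f(0) = 1 and 0 < ∫_{ℝⁿ} f(x) dx. Then for every t > 1, the set H_t(f) = ⋃_{λ∈(0,1)} (log(t/λ))^{−1}·K_λ(f) is bounded. Moreover, H₁(f) = ⋃_{λ∈(0,1)} (log(1/λ))^{−1}·K_λ(f) is a convex set, and if H₁(f) is unbounded then its Lebesgue measure is infinite. -/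
/-!
Since `f 0 = 1`, log-concavity on the segment `[0, x]` gives `f (θ • x) ≥ f x ^ θ` for
`θ ∈ [0, 1]`; with `θ = log λ' / log λ` this maps `K_λ` into `K_λ'` for `λ ≤ λ' < 1`, compatibly
with the scalings `(log (1/λ))⁻¹`. So `H₁` is a directed union of convex sets, and one bounded level
set `K_λ₀` bounds every `K_λ` by a multiple of `1 + log λ / log λ₀`, which the factor
`(log (t/λ))⁻¹` absorbs when `t > 1`. Such a `K_λ₀` exists because `0 < ∫ f < ∞` yields a convex
level set of positive finite measure: a convex set of positive measure has interior, so if it were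
unbounded it would contain infinitely many disjoint balls of one radius.
-/

open MeasureTheory Pointwise

noncomputable section

/-- `H_t(f) = ⋃_{λ∈(0,1)} (log(t/λ))⁻¹·K_λ(f)` where `K_λ(f) = {x : f x ≥ λ}`. -/
def Hset {n : ℕ} (f : (Fin n → ℝ) → ℝ) (t : ℝ) : Set (Fin n → ℝ) :=
  ⋃ l ∈ Set.Ioo (0 : ℝ) 1, (Real.log (t / l))⁻¹ • {x : Fin n → ℝ | l ≤ f x}

open Set Metric Bornology Real
open scoped ENNReal

theorem Metric.exists_seq_pairwise_le_dist_of_not_isBounded {α : Type*} [PseudoMetricSpace α]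
    {s : Set α} (hs : ¬IsBounded s) (δ : ℝ) :
    ∃ p : ℕ → α, (∀ k, p k ∈ s) ∧ Pairwise fun i j => δ ≤ dist (p i) (p j) := by
  obtain ⟨p, hps, hp⟩ := exists_seq_of_forall_finset_exists (· ∈ s)
    (fun x y => δ ≤ dist x y) fun t _ => by
      have hsub : ¬s ⊆ ⋃ x ∈ t, ball x δ := fun h =>
        hs (((isBounded_biUnion_finset t).2 fun x _ => isBounded_ball).subset h)
      obtain ⟨y, hys, hy⟩ := not_subset.1 hsub
      simp only [mem_iUnion, mem_ball, not_exists, not_lt] at hy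
      exact ⟨y, hys, fun x hx => (hy x hx).trans_eq (dist_comm y x)⟩
  refine ⟨p, hps, fun i j hij => ?_⟩
  rcases hij.lt_or_gt with h | h
  · exact hp i j h
  · exact (hp j i h).trans_eq (dist_comm _ _)

section HaarMeasure

open Function

variable {E : Type*} [NormedAddCommGroup E] [NormedSpace ℝ E] {s : Set E}

theorem Convex.ball_midpoint_subset (hs : Convex ℝ s) {z p : E} {r : ℝ} (hz : ball z r ⊆ s)
    (hp : p ∈ s) : ball (midpoint ℝ z p) (r / 2) ⊆ s := by
  intro w hw
  have hq : z + (2 : ℝ) • (w - midpoint ℝ z p) ∈ ball z r := by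
    rw [mem_ball, dist_eq_norm, add_sub_cancel_left, norm_smul, ← dist_eq_norm]
    rw [mem_ball] at hw
    norm_num
    linarith
  convert hs (hz hq) hp (by norm_num : (0 : ℝ) ≤ 1 / 2) (by norm_num : (0 : ℝ) ≤ 1 / 2)
    (by norm_num) using 1
  simp only [midpoint_eq_smul_add, invOf_eq_inv]
  module

variable [MeasurableSpace E] [BorelSpace E] [FiniteDimensional ℝ E] {μ : Measure E}
  [μ.IsAddHaarMeasure]

theorem MeasureTheory.Measure.addHaar_smul_ne_zero {c : ℝ} (hc : c ≠ 0) (hs : μ s ≠ 0) :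
    μ (c • s) ≠ 0 := by
  rw [Measure.addHaar_smul]
  exact mul_ne_zero (ENNReal.ofReal_pos.2 (abs_pos.2 (pow_ne_zero _ hc))).ne' hs

theorem Convex.interior_nonempty_of_measure_ne_zero (hs : Convex ℝ s) (h : μ s ≠ 0) :
    (interior s).Nonempty := by
  by_contra! hint
  refine h (measure_mono_null ?_ (hs.addHaar_frontier μ))
  rw [frontier, hint, sdiff_empty]
  exact subset_closure

theorem Convex.measure_eq_top_of_not_isBounded (hs : Convex ℝ s) (h0 : μ s ≠ 0)
    (hub : ¬IsBounded s) : μ s = ∞ := by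
  obtain ⟨z, hz⟩ := hs.interior_nonempty_of_measure_ne_zero h0
  obtain ⟨r, hr, hball⟩ := isOpen_iff.1 isOpen_interior z hz
  obtain ⟨p, hps, hsep⟩ := exists_seq_pairwise_le_dist_of_not_isBounded hub (2 * r)
  have hdisj : Pairwise (Disjoint on fun k => ball (midpoint ℝ z (p k)) (r / 2)) :=
    fun i j hij => ball_disjoint_ball <| by
      rw [dist_eq_norm, midpoint_eq_smul_add, midpoint_eq_smul_add, ← smul_sub,
        add_sub_add_left_eq_sub, norm_smul, ← dist_eq_norm]
      have := hsep hij
      norm_num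
      linarith
  refine eq_top_iff.2 ?_
  calc ∞ = ∑' _ : ℕ, μ (ball (0 : E) (r / 2)) :=
        (ENNReal.tsum_const_eq_top_of_ne_zero (measure_ball_pos μ _ (by positivity)).ne').symm
    _ = μ (⋃ k, ball (midpoint ℝ z (p k)) (r / 2)) := by
        rw [measure_iUnion hdisj fun _ => measurableSet_ball]
        simp only [Measure.addHaar_ball_center]
    _ ≤ μ s := measure_mono <| iUnion_subset fun k =>
        hs.ball_midpoint_subset (hball.trans interior_subset) (hps k)

end HaarMeasure

theorem MeasureTheory.exists_measure_superlevel_ne_zero_of_integral_pos {α : Type*}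
    [MeasurableSpace α] {μ : Measure α} {f : α → ℝ} (hf : 0 < ∫ x, f x ∂μ) :
    ∃ l ∈ Ioo (0 : ℝ) 1, μ {x | l ≤ f x} ≠ 0 := by
  by_contra! h
  have hnull : μ (⋃ k : ℕ, {x | ((k : ℝ) + 2)⁻¹ ≤ f x}) = 0 :=
    measure_iUnion_null fun k => h _ ⟨by positivity, inv_lt_one_of_one_lt₀ (by linarith)⟩
  refine hf.not_ge (integral_nonpos_of_ae (ae_iff.2 (measure_mono_null (fun x hx => ?_) hnull)))
  obtain ⟨k, hk⟩ := exists_nat_one_div_lt (not_le.1 hx)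
  refine mem_iUnion.2 ⟨k, (lt_of_le_of_lt ?_ hk).le⟩
  rw [one_div]
  gcongr
  linarith

def IsLogConcave {E : Type*} [AddCommGroup E] [Module ℝ E] (f : E → ℝ) : Prop :=
  ∀ x y : E, ∀ θ : ℝ, 0 ≤ θ → θ ≤ 1 → f x ^ (1 - θ) * f y ^ θ ≤ f ((1 - θ) • x + θ • y)

namespace IsLogConcave

section Module

variable {E : Type*} [AddCommGroup E] [Module ℝ E] {f : E → ℝ}

theorem convex_superlevel (hf : IsLogConcave f) {l : ℝ} (hl : 0 < l) :
    Convex ℝ {x | l ≤ f x} := by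
  intro x hx y hy a b _ hb hab
  obtain rfl : a = 1 - b := by linarith
  calc l = l ^ (1 - b) * l ^ b := by rw [← rpow_add hl, sub_add_cancel, Real.rpow_one]
    _ ≤ f x ^ (1 - b) * f y ^ b :=
        mul_le_mul (rpow_le_rpow hl.le hx (by linarith)) (rpow_le_rpow hl.le hy hb)
          (by positivity) (rpow_nonneg (hl.le.trans hx) _)
    _ ≤ f ((1 - b) • x + b • y) := hf x y b hb (by linarith)

theorem rpow_le_apply_smul (hf : IsLogConcave f) (h0 : f 0 = 1) {x : E} {l θ : ℝ} (hl : 0 ≤ l)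
    (hx : l ≤ f x) (hθ0 : 0 ≤ θ) (hθ1 : θ ≤ 1) : l ^ θ ≤ f (θ • x) :=
  calc l ^ θ ≤ f x ^ θ := by gcongr
    _ = f 0 ^ (1 - θ) * f x ^ θ := by rw [h0, Real.one_rpow, one_mul]
    _ ≤ f ((1 - θ) • 0 + θ • x) := hf 0 x θ hθ0 hθ1
    _ = f (θ • x) := by rw [smul_zero, zero_add]

theorem le_apply_logb_smul (hf : IsLogConcave f) (h0 : f 0 = 1) {x : E} {l l' : ℝ}
    (hl : l ∈ Ioo 0 1) (hll' : l ≤ l') (hl' : l' ≤ 1) (hx : l ≤ f x) :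
    l' ≤ f (logb l l' • x) := by
  have hl'0 : 0 < l' := hl.1.trans_le hll'
  calc l' = l ^ logb l l' := (rpow_logb hl.1 hl.2.ne hl'0).symm
    _ ≤ f (logb l l' • x) :=
        hf.rpow_le_apply_smul h0 hl.1.le hx (logb_nonneg_of_base_lt_one hl.1 hl.2 hl'0 hl')
          ((logb_le_iff_le_rpow_of_base_lt_one hl.1 hl.2 hl'0).2 (by rwa [Real.rpow_one]))

theorem inv_log_smul_superlevel_mono (hf : IsLogConcave f) (h0 : f 0 = 1) {l l' : ℝ}
    (hl : l ∈ Ioo 0 1) (hl' : l' ∈ Ioo 0 1) (hll' : l ≤ l') :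
    (log (1 / l))⁻¹ • {x | l ≤ f x} ⊆ (log (1 / l'))⁻¹ • {x | l' ≤ f x} := by
  rintro _ ⟨x, hx, rfl⟩
  refine ⟨logb l l' • x, hf.le_apply_logb_smul h0 hl hll' hl'.2.le hx, ?_⟩
  have := (log_neg hl.1 hl.2).ne
  have := (log_neg hl'.1 hl'.2).ne
  simp only [smul_smul, one_div, log_inv, logb]
  congr 1
  field_simp

end Module

variable {E : Type*} [NormedAddCommGroup E] [NormedSpace ℝ E] {f : E → ℝ}

theorem norm_le_of_le_apply (hf : IsLogConcave f) (h0 : f 0 = 1) {l₀ R : ℝ}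
    (hl₀ : l₀ ∈ Ioo 0 1) (hR : {x | l₀ ≤ f x} ⊆ closedBall 0 R) {l : ℝ} (hl : l ∈ Ioo 0 1)
    {x : E} (hx : l ≤ f x) : ‖x‖ ≤ R * (1 + logb l₀ l) := by
  have hR0 : 0 ≤ R := by
    simpa using hR (show l₀ ≤ f 0 by rw [h0]; exact hl₀.2.le)
  rcases le_or_gt l₀ l with hl₀l | hll₀
  · have hxR : ‖x‖ ≤ R := mem_closedBall_zero_iff.1 (hR (hl₀l.trans hx))
    have := logb_nonneg_of_base_lt_one hl₀.1 hl₀.2 hl.1 hl.2.le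
    nlinarith
  · set θ := logb l l₀
    have hθ : 0 < θ := logb_pos_of_base_lt_one hl.1 hl.2 hl₀.1 hl₀.2
    have hθx : θ * ‖x‖ ≤ R := by
      have := mem_closedBall_zero_iff.1 (hR (hf.le_apply_logb_smul h0 hl hll₀.le hl₀.2.le hx))
      rwa [norm_smul, norm_of_nonneg hθ.le] at this
    rw [← inv_logb l l₀, mul_add, mul_one]
    have : ‖x‖ ≤ R * θ⁻¹ := by rw [le_mul_inv_iff₀ hθ]; linarith
    linarith

end IsLogConcave

section Hset

variable {n : ℕ} {f : (Fin n → ℝ) → ℝ}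

theorem isBounded_Hset (hf : IsLogConcave f) (h0 : f 0 = 1) {l₀ R : ℝ} (hl₀ : l₀ ∈ Ioo 0 1)
    (hR : {x | l₀ ≤ f x} ⊆ closedBall 0 R) {t : ℝ} (ht : 1 < t) : IsBounded (Hset f t) := by
  have hT : 0 < log t := log_pos ht
  have hc : 0 < -log l₀ := neg_pos.2 (log_neg hl₀.1 hl₀.2)
  refine (isBounded_closedBall (x := 0) (r := R / log t + R / -log l₀)).subset ?_
  refine iUnion₂_subset fun l hl => ?_
  rintro _ ⟨x, hx, rfl⟩
  have hxR := hf.norm_le_of_le_apply h0 hl₀ hR hl hx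
  have ha : 0 < -log l := neg_pos.2 (log_neg hl.1 hl.2)
  have hR0 : 0 ≤ R := by simpa using hR (show l₀ ≤ f 0 by rw [h0]; exact hl₀.2.le)
  rw [logb, ← neg_div_neg_eq] at hxR
  rw [mem_closedBall_zero_iff, norm_smul, norm_inv, log_div (by linarith) hl.1.ne',
    norm_of_nonneg (by linarith), inv_mul_le_iff₀ (by linarith), sub_eq_add_neg]
  generalize -log l = a at *
  generalize -log l₀ = c at *
  generalize log t = T at *
  have hexpand : (T + a) * (R / T + R / c) = R * (1 + a / c) + (R * T / c + R * a / T) := by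
    field_simp
    ring
  have : 0 ≤ R * T / c + R * a / T := by positivity
  linarith

theorem convex_Hset_one (hf : IsLogConcave f) (h0 : f 0 = 1) : Convex ℝ (Hset f 1) := by
  rw [Hset, biUnion_eq_iUnion]
  refine Directed.convex_iUnion (fun a b => ?_) fun l => (hf.convex_superlevel l.2.1).smul _
  have hab : max a.1 b.1 ∈ Ioo (0 : ℝ) 1 := ⟨lt_max_of_lt_left a.2.1, max_lt a.2.2 b.2.2⟩
  exact ⟨⟨_, hab⟩, hf.inv_log_smul_superlevel_mono h0 a.2 hab (le_max_left _ _),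
    hf.inv_log_smul_superlevel_mono h0 b.2 hab (le_max_right _ _)⟩

end Hset

theorem stmt_13_general (n : ℕ)
    (f : (Fin n → ℝ) → ℝ)
    (hf_int : Integrable f) (hf_pos : 0 < ∫ x, f x)
    (hf_lc : ∀ x y : Fin n → ℝ, ∀ θ : ℝ, 0 ≤ θ → θ ≤ 1 →
      f x ^ (1 - θ) * f y ^ θ ≤ f ((1 - θ) • x + θ • y))
    (hf0 : f 0 = 1) :
    (∀ t : ℝ, 1 < t → Bornology.IsBounded (Hset f t)) ∧
    Convex ℝ (Hset f 1) ∧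
    (¬ Bornology.IsBounded (Hset f 1) → volume (Hset f 1) = ⊤) := by
  have hf : IsLogConcave f := hf_lc
  obtain ⟨l₀, hl₀, hK₀⟩ := exists_measure_superlevel_ne_zero_of_integral_pos hf_pos
  have hK₀_bdd : IsBounded {x | l₀ ≤ f x} := by
    by_contra hub
    exact (hf_int.measure_ge_lt_top hl₀.1).ne
      ((hf.convex_superlevel hl₀.1).measure_eq_top_of_not_isBounded hK₀ hub)
  obtain ⟨R, hR⟩ := hK₀_bdd.subset_closedBall 0
  refine ⟨fun t ht => isBounded_Hset hf hf0 hl₀ hR ht, convex_Hset_one hf hf0,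
    fun hub => (convex_Hset_one hf hf0).measure_eq_top_of_not_isBounded ?_ hub⟩
  have hc : (log (1 / l₀))⁻¹ ≠ 0 := by
    rw [one_div, log_inv]
    exact inv_ne_zero (neg_ne_zero.2 (log_neg hl₀.1 hl₀.2).ne)
  exact fun hnull => Measure.addHaar_smul_ne_zero hc hK₀ <| measure_mono_null
    (subset_biUnion_of_mem (u := fun l => (log (1 / l))⁻¹ • {x | l ≤ f x}) hl₀) hnull

/-- Lemma 3.4 of the paper: for an integrable log-concave `f` with `‖f‖_∞ = f 0 = 1`,
`H_t(f)` is bounded for every `t > 1`; moreover `H₁(f)` is convex, and if `H₁(f)` is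
unbounded then `|H₁(f)| = +∞`. -/
theorem stmt_13 (n : ℕ)
    (f : (Fin n → ℝ) → ℝ) (hf_nonneg : ∀ x, 0 ≤ f x)
    (hf_int : Integrable f) (hf_pos : 0 < ∫ x, f x)
    (hf_lc : ∀ x y : Fin n → ℝ, ∀ θ : ℝ, 0 ≤ θ → θ ≤ 1 →
      f x ^ (1 - θ) * f y ^ θ ≤ f ((1 - θ) • x + θ • y))
    (hf_le : ∀ x, f x ≤ 1) (hf0 : f 0 = 1) :
    (∀ t : ℝ, 1 < t → Bornology.IsBounded (Hset f t)) ∧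
    Convex ℝ (Hset f 1) ∧
    (¬ Bornology.IsBounded (Hset f 1) → volume (Hset f 1) = ⊤) :=
  stmt_13_general n f hf_int hf_pos hf_lc hf0
end
end

section
/- Let f : ℝⁿ → [0,+∞) be an integrable log-concave function with ‖f‖_∞ = f(0) = 1, and write f = exp(−u) with u : ℝⁿ → [0,+∞] convex. Then for every t > 1 the set H_t(f) = ⋃_{λ∈(0,1)} (log(t/λ))^{−1}·K_λ(f) is convex, and its closure equals the polar of the superlevel set of the polar function of f at level 1/t: closure(H_t(f)) = (K_{1/t}(f°))°, where f°(x) = exp(−u*(x)), u*(x) = sup_{y∈ℝⁿ} (⟨x,y⟩ − u(y)) is the Legendre transform of u, K_{1/t}(f°) = {x ∈ ℝⁿ : f°(x) ≥ 1/t}, and for a set K ⊆ ℝⁿ, K° = {x ∈ ℝⁿ : ⟨x,y⟩ ≤ 1 for all y ∈ K}. -/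
open MeasureTheory Pointwise ENNReal

noncomputable section

/-- The Legendre transform `u*(x) = sup_y (⟨x,y⟩ - u(y)) ∈ [0,∞]` of the convex function
`u = -log f : ℝⁿ → [0,∞]` associated to a log-concave `f = exp(-u)` with `f 0 = 1`, `f ≤ 1`.
Points where `f y = 0` (i.e. `u y = ∞`) contribute `-∞`, i.e. nothing; since
`u*(x) ≥ ⟨x,0⟩ - u(0) = 0`, clamping each term at `0` via `ENNReal.ofReal` gives exactly
`u*`. -/
def legendre {n : ℕ} (f : (Fin n → ℝ) → ℝ) (x : Fin n → ℝ) : ℝ≥0∞ :=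
  ⨆ y : Fin n → ℝ,
    if f y = 0 then 0 else ENNReal.ofReal ((∑ i, x i * y i) + Real.log (f y))

/-- The polar of a set `K ⊆ ℝⁿ`: `K° = {x : ⟨x,y⟩ ≤ 1 for all y ∈ K}`. -/
def polarSet {n : ℕ} (K : Set (Fin n → ℝ)) : Set (Fin n → ℝ) :=
  {x | ∀ y ∈ K, (∑ i, x i * y i) ≤ 1}

/-
With `l = t * exp (-s)`, `H_t(f)` is the image of `{(s, y) | log t < s, t * exp (-s) ≤ f y}`
under the perspective map `(s, y) ↦ s⁻¹ • y`. That set is convex by log-concavity of `f`, and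
perspective images of convex sets are convex.

For the closure, Hahn–Banach separation (with `0 ∈ H_t(f)`) gives the bipolar identity
`closure H_t(f) = (H_t(f)°)°`, and `H_t(f)° = {x | u*(x) ≤ log t}`: `⟪x, y⟫ ≤ s` for all
`s > log t` with `u y ≤ s - log t` says exactly `⟪x, y⟫ - u y ≤ log t`, the constraint
`s > log t` being harmless because `u ≥ 0`.
-/

open Real Set

section Perspective

variable {E : Type*} [AddCommGroup E] [Module ℝ E]

/- `a • (p.1⁻¹ • p.2) + b • (q.1⁻¹ • q.2)` is the image of the convex combination of `p` and `q`
with weights proportional to `a / p.1` and `b / q.1`. -/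
theorem Convex.image_inv_smul {C : Set (ℝ × E)} (hC : Convex ℝ C) (hpos : ∀ p ∈ C, 0 < p.1) :
    Convex ℝ ((fun p : ℝ × E => p.1⁻¹ • p.2) '' C) := by
  rintro _ ⟨p, hp, rfl⟩ _ ⟨q, hq, rfl⟩ a b ha hb hab
  have hp1 := hpos p hp
  have hq1 := hpos q hq
  set w := a / p.1 + b / q.1 with hw_def
  have hw : 0 < w := by
    rcases ha.eq_or_lt with rfl | ha'
    · rw [zero_add] at hab
      simp [hw_def, hab, hq1]
    · have := div_pos ha' hp1
      positivity
  have hw_inv : a / p.1 / w * p.1 + b / q.1 / w * q.1 = w⁻¹ := by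
    field_simp
    rw [hab]
  refine ⟨(a / p.1 / w) • p + (b / q.1 / w) • q,
    hC hp hq (by positivity) (by positivity) (by rw [← add_div, div_self hw.ne']), ?_⟩
  simp only [Prod.fst_add, Prod.snd_add, Prod.smul_fst, Prod.smul_snd, smul_eq_mul, hw_inv,
    inv_inv, smul_add, smul_smul]
  congr 2 <;> field_simp

theorem convex_setOf_mul_exp_neg_le {f : E → ℝ}
    (hf_lc : ∀ x y : E, ∀ θ : ℝ, 0 ≤ θ → θ ≤ 1 →
      f x ^ (1 - θ) * f y ^ θ ≤ f ((1 - θ) • x + θ • y))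
    {t : ℝ} (ht : 0 < t) :
    Convex ℝ {p : ℝ × E | t * exp (-p.1) ≤ f p.2} := by
  intro p hp q hq a b ha hb hab
  rw [mem_ofPred_eq] at hp hq ⊢
  obtain rfl : a = 1 - b := by linarith
  have hp0 : 0 ≤ t * exp (-p.1) := by positivity
  have hq0 : 0 ≤ t * exp (-q.1) := by positivity
  calc t * exp (-((1 - b) • p + b • q).1)
      = (t * exp (-p.1)) ^ (1 - b) * (t * exp (-q.1)) ^ b := by
        rw [mul_rpow ht.le (exp_pos _).le, mul_rpow ht.le (exp_pos _).le, ← exp_mul, ← exp_mul,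
          mul_mul_mul_comm, ← rpow_add ht, sub_add_cancel, Real.rpow_one, ← exp_add]
        simp only [Prod.fst_add, Prod.smul_fst, smul_eq_mul]
        ring_nf
    _ ≤ f p.2 ^ (1 - b) * f q.2 ^ b :=
        mul_le_mul (rpow_le_rpow hp0 hp ha) (rpow_le_rpow hq0 hq hb) (by positivity)
          (rpow_nonneg (hp0.trans hp) _)
    _ ≤ f ((1 - b) • p.2 + b • q.2) := hf_lc _ _ _ hb (by linarith)

end Perspective

section Polar

variable {n : ℕ}

theorem isClosed_polarSet (K : Set (Fin n → ℝ)) : IsClosed (polarSet K) := by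
  have : polarSet K = ⋂ y ∈ K, {x | x ⬝ᵥ y ≤ 1} := by
    ext x
    simp [polarSet, dotProduct]
  rw [this]
  exact isClosed_biInter fun y _ => isClosed_le (continuous_id.dotProduct continuous_const)
    continuous_const

theorem subset_polarSet_polarSet (K : Set (Fin n → ℝ)) : K ⊆ polarSet (polarSet K) :=
  fun z hz x hx => by
    simpa only [dotProduct, mul_comm] using hx z hz

theorem exists_dotProduct_eq (g : (Fin n → ℝ) →ₗ[ℝ] ℝ) : ∃ x, ∀ v, g v = v ⬝ᵥ x :=
  ⟨fun i => g fun j => if i = j then 1 else 0, fun v => by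
    simp [g.pi_apply_eq_sum_univ v, dotProduct]⟩

/- `0 ∈ H` makes the separating level positive, so that the separating functional can be
rescaled into `polarSet H`. -/
theorem closure_eq_polarSet_polarSet {H : Set (Fin n → ℝ)} (hH : Convex ℝ H) (h0 : 0 ∈ H) :
    closure H = polarSet (polarSet H) := by
  refine (closure_minimal (subset_polarSet_polarSet H) (isClosed_polarSet _)).antisymm
    fun z hz => ?_
  by_contra hzH
  obtain ⟨g, α, hg, hα⟩ := geometric_hahn_banach_closed_point hH.closure isClosed_closure hzH
  have hα0 : 0 < α := by simpa using hg 0 (subset_closure h0)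
  obtain ⟨x, hx⟩ := exists_dotProduct_eq (g : (Fin n → ℝ) →ₗ[ℝ] ℝ)
  have hxH : α⁻¹ • x ∈ polarSet H := fun y hy => by
    have : y ⬝ᵥ x < α := hx y ▸ hg y (subset_closure hy)
    show α⁻¹ • x ⬝ᵥ y ≤ 1
    rw [smul_dotProduct, dotProduct_comm, smul_eq_mul, inv_mul_le_iff₀ hα0, mul_one]
    exact this.le
  have : z ⬝ᵥ (α⁻¹ • x) ≤ 1 := hz _ hxH
  rw [dotProduct_smul, smul_eq_mul, inv_mul_le_iff₀ hα0, mul_one, ← hx] at this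
  exact (hα.trans_le this).false

end Polar

section Hset

variable {n : ℕ} {f : (Fin n → ℝ) → ℝ} {t : ℝ}

theorem zero_mem_Hset (h0 : 0 < f 0) : 0 ∈ Hset f t :=
  mem_iUnion₂.2 ⟨min (f 0) (1 / 2), ⟨lt_min h0 (by norm_num), min_lt_of_right_lt (by norm_num)⟩,
    0, (min_le_left _ _ : min (f 0) (1 / 2) ≤ f 0), smul_zero _⟩

theorem Hset_eq_image (ht : 0 < t) :
    Hset f t = (fun p : ℝ × (Fin n → ℝ) => p.1⁻¹ • p.2) ''
      {p | log t < p.1 ∧ t * exp (-p.1) ≤ f p.2} := by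
  ext z
  simp only [Hset, mem_iUnion₂, mem_smul_set, mem_image, mem_ofPred_eq, Prod.exists, mem_Ioo]
  constructor
  · rintro ⟨l, ⟨hl0, hl1⟩, y, hy, rfl⟩
    refine ⟨log (t / l), y, ⟨?_, ?_⟩, rfl⟩
    · rw [log_div ht.ne' hl0.ne']
      linarith [log_neg hl0 hl1]
    · rwa [exp_neg, exp_log (div_pos ht hl0), inv_div, mul_div_cancel₀ _ ht.ne']
  · rintro ⟨s, y, ⟨hs, hy⟩, rfl⟩
    refine ⟨t * exp (-s), ⟨by positivity, ?_⟩, y, hy, ?_⟩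
    · rw [← exp_log ht, ← exp_add]
      exact exp_lt_one_iff.2 (by linarith)
    · rw [div_mul_cancel_left₀ ht.ne', exp_neg, inv_inv, log_exp]

theorem mul_exp_neg_le_iff {s v : ℝ} (ht : 0 < t) :
    t * exp (-s) ≤ v ↔ 0 < v ∧ log t - log v ≤ s := by
  rw [← exp_log ht, ← exp_add, exp_log ht]
  constructor
  · intro h
    have hv : 0 < v := (exp_pos _).trans_le h
    exact ⟨hv, by linarith [(le_log_iff_exp_le hv).2 h]⟩
  · rintro ⟨hv, h⟩
    exact (le_log_iff_exp_le hv).1 (by linarith)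

theorem legendre_le_ofReal_iff {c : ℝ} (hc : 0 ≤ c) (x : Fin n → ℝ) :
    legendre f x ≤ ENNReal.ofReal c ↔ ∀ y, f y ≠ 0 → x ⬝ᵥ y + log (f y) ≤ c := by
  simp only [legendre, iSup_le_iff]
  refine forall_congr' fun y => ?_
  by_cases hy : f y = 0
  · simp [hy]
  · simp only [hy, if_false, ENNReal.ofReal_le_ofReal_iff hc]
    exact ⟨fun h _ => h, fun h => h hy⟩

theorem polarSet_Hset (hf_nonneg : ∀ x, 0 ≤ f x) (hf_le : ∀ x, f x ≤ 1) (ht : 1 ≤ t) :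
    polarSet (Hset f t) = {x | legendre f x ≤ ENNReal.ofReal (log t)} := by
  ext x
  rw [Hset_eq_image (by linarith), mem_ofPred_eq, legendre_le_ofReal_iff (log_nonneg ht)]
  simp only [polarSet, forall_mem_image, Prod.forall, mem_ofPred_eq, and_imp]
  change (∀ s y, log t < s → t * exp (-s) ≤ f y → x ⬝ᵥ (s⁻¹ • y) ≤ 1) ↔ _
  constructor
  · intro h y hy
    have hy0 : 0 < f y := (hf_nonneg y).lt_of_ne' hy
    have hlog : log (f y) ≤ 0 := log_nonpos (hf_nonneg y) (hf_le y)
    suffices x ⬝ᵥ y ≤ log t - log (f y) by linarith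
    refine le_of_forall_gt_imp_ge_of_dense fun s hs => ?_
    have hs0 : 0 < s := by linarith [log_nonneg ht]
    have := h s y (by linarith) ((mul_exp_neg_le_iff (by linarith)).2 ⟨hy0, hs.le⟩)
    rwa [dotProduct_smul, smul_eq_mul, inv_mul_le_iff₀ hs0, mul_one] at this
  · intro h s y hs hy
    obtain ⟨hy0, hys⟩ := (mul_exp_neg_le_iff (by linarith)).1 hy
    rw [dotProduct_smul, smul_eq_mul, inv_mul_le_iff₀ (by linarith [log_nonneg ht]), mul_one]
    linarith [h y hy0.ne']

theorem convex_Hset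
    (hf_lc : ∀ x y : Fin n → ℝ, ∀ θ : ℝ, 0 ≤ θ → θ ≤ 1 →
      f x ^ (1 - θ) * f y ^ θ ≤ f ((1 - θ) • x + θ • y))
    (ht : 1 ≤ t) : Convex ℝ (Hset f t) := by
  have ht0 : 0 < t := one_pos.trans_le ht
  rw [Hset_eq_image ht0]
  refine Convex.image_inv_smul ?_ fun p hp => (log_nonneg ht).trans_lt hp.1
  exact (convex_halfSpace_gt (LinearMap.fst ℝ ℝ _).isLinear _).inter
    (convex_setOf_mul_exp_neg_le hf_lc ht0)

end Hset

theorem stmt_14_general (n : ℕ)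
    (f : (Fin n → ℝ) → ℝ) (hf_nonneg : ∀ x, 0 ≤ f x)
    (hf_lc : ∀ x y : Fin n → ℝ, ∀ θ : ℝ, 0 ≤ θ → θ ≤ 1 →
      f x ^ (1 - θ) * f y ^ θ ≤ f ((1 - θ) • x + θ • y))
    (hf_le : ∀ x, f x ≤ 1) (hf0 : f 0 = 1)
    (t : ℝ) (ht : 1 < t) :
    Convex ℝ (Hset f t) ∧
    closure (Hset f t) =
      polarSet {x : Fin n → ℝ | legendre f x ≤ ENNReal.ofReal (Real.log t)} := by
  have hconv : Convex ℝ (Hset f t) := convex_Hset hf_lc ht.le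
  refine ⟨hconv, ?_⟩
  rw [closure_eq_polarSet_polarSet hconv (zero_mem_Hset (hf0 ▸ one_pos)),
    polarSet_Hset hf_nonneg hf_le ht.le]

/-- Lemma 3.6 of the paper: for an integrable log-concave `f = exp(-u)` with
`‖f‖_∞ = f 0 = 1` and every `t > 1`, the set `H_t(f)` is convex and its closure equals the
polar of the superlevel set `K_{1/t}(f°) = {x : f°(x) ≥ 1/t} = {x : u*(x) ≤ log t}` of the
polar function `f° = exp(-u*)`. -/
theorem stmt_14 (n : ℕ)
    (f : (Fin n → ℝ) → ℝ) (hf_nonneg : ∀ x, 0 ≤ f x)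
    (hf_int : Integrable f)
    (hf_lc : ∀ x y : Fin n → ℝ, ∀ θ : ℝ, 0 ≤ θ → θ ≤ 1 →
      f x ^ (1 - θ) * f y ^ θ ≤ f ((1 - θ) • x + θ • y))
    (hf_le : ∀ x, f x ≤ 1) (hf0 : f 0 = 1)
    (t : ℝ) (ht : 1 < t) :
    Convex ℝ (Hset f t) ∧
    closure (Hset f t) =
      polarSet {x : Fin n → ℝ | legendre f x ≤ ENNReal.ofReal (Real.log t)} :=
  stmt_14_general n f hf_nonneg hf_lc hf_le hf0 t ht
end
end

section
/- Let t₀, t₁ ≥ 1 be reals, d ≥ 1 a real number, θ ∈ [0,1], and a ∈ (0,1]. Define t_θ ≥ 1 by (log t_θ)^d = (1−θ)(log t₀)^d + θ(log t₁)^d. Then (1−θ)·(log(t₀/a))^d + θ·(log(t₁/a))^d ≤ (log(t_θ/a))^d. -/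
/-- Lemma 3.7 of the paper: for `t₀, t₁ ≥ 1`, `d ≥ 1`, `θ ∈ [0,1]`, `a ∈ (0,1]`, and `t_θ ≥ 1`
defined by `(log t_θ)^d = (1-θ)(log t₀)^d + θ(log t₁)^d`, one has
`(1-θ)(log(t₀/a))^d + θ(log(t₁/a))^d ≤ (log(t_θ/a))^d`. -/
theorem stmt_15 (t₀ t₁ d θ a tθ : ℝ)
    (ht₀ : 1 ≤ t₀) (ht₁ : 1 ≤ t₁) (hd : 1 ≤ d)
    (hθ0 : 0 ≤ θ) (hθ1 : θ ≤ 1) (ha0 : 0 < a) (ha1 : a ≤ 1)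
    (htθ : 1 ≤ tθ)
    (hdef : Real.log tθ ^ d = (1 - θ) * Real.log t₀ ^ d + θ * Real.log t₁ ^ d) :
    (1 - θ) * Real.log (t₀ / a) ^ d + θ * Real.log (t₁ / a) ^ d ≤
      Real.log (tθ / a) ^ d := by
  have hd0 : (0 : ℝ) < d := lt_of_lt_of_le one_pos hd
  set b : ℝ := -Real.log a with hbdef
  have hb : 0 ≤ b := by
    have := Real.log_nonpos ha0.le ha1
    simp only [hbdef]; linarith
  have hlog : ∀ t : ℝ, 1 ≤ t → Real.log (t / a) = Real.log t + b := by
    intro t ht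
    rw [Real.log_div (by linarith) (ne_of_gt ha0)]
    simp [hbdef]; ring
  have hL₀ : 0 ≤ Real.log t₀ := Real.log_nonneg ht₀
  have hL₁ : 0 ≤ Real.log t₁ := Real.log_nonneg ht₁
  have hLθ : 0 ≤ Real.log tθ := Real.log_nonneg htθ
  rw [hlog t₀ ht₀, hlog t₁ ht₁, hlog tθ htθ]
  set L₀ := Real.log t₀
  set L₁ := Real.log t₁
  set Lθ := Real.log tθ
  set w₀ : ℝ := (1 - θ) ^ (1 / d) with hw₀def
  set w₁ : ℝ := θ ^ (1 / d) with hw₁def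
  have h1θ : (0 : ℝ) ≤ 1 - θ := by linarith
  have hw₀ : 0 ≤ w₀ := Real.rpow_nonneg h1θ _
  have hw₁ : 0 ≤ w₁ := Real.rpow_nonneg hθ0 _
  have hw₀d : w₀ ^ d = 1 - θ := by
    rw [hw₀def, ← Real.rpow_mul h1θ, one_div_mul_cancel hd0.ne', Real.rpow_one]
  have hw₁d : w₁ ^ d = θ := by
    rw [hw₁def, ← Real.rpow_mul hθ0, one_div_mul_cancel hd0.ne', Real.rpow_one]
  set f : Fin 2 → ℝ := ![w₀ * L₀, w₁ * L₁] with hf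
  set g : Fin 2 → ℝ := ![w₀ * b, w₁ * b] with hg
  have key := Real.Lp_add_le (Finset.univ) f g hd
  have hsum1 : ∑ i ∈ Finset.univ, |f i + g i| ^ d
      = (1 - θ) * (L₀ + b) ^ d + θ * (L₁ + b) ^ d := by
    rw [Fin.sum_univ_two]
    simp only [hf, hg, Matrix.cons_val_zero, Matrix.cons_val_one, Matrix.head_cons]
    rw [← mul_add w₀, ← mul_add w₁,
      abs_of_nonneg (mul_nonneg hw₀ (by linarith)),
      abs_of_nonneg (mul_nonneg hw₁ (by linarith)),
      Real.mul_rpow hw₀ (by linarith), Real.mul_rpow hw₁ (by linarith),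
      hw₀d, hw₁d]
  have hsum2 : (∑ i ∈ Finset.univ, |f i| ^ d) ^ (1 / d) = Lθ := by
    rw [Fin.sum_univ_two]
    simp only [hf, Matrix.cons_val_zero, Matrix.cons_val_one, Matrix.head_cons]
    rw [abs_of_nonneg (mul_nonneg hw₀ hL₀), abs_of_nonneg (mul_nonneg hw₁ hL₁),
      Real.mul_rpow hw₀ hL₀, Real.mul_rpow hw₁ hL₁, hw₀d, hw₁d, ← hdef,
      ← Real.rpow_mul hLθ, mul_one_div_cancel hd0.ne', Real.rpow_one]
  have hsum3 : (∑ i ∈ Finset.univ, |g i| ^ d) ^ (1 / d) = b := by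
    rw [Fin.sum_univ_two]
    simp only [hg, Matrix.cons_val_zero, Matrix.cons_val_one, Matrix.head_cons]
    rw [abs_of_nonneg (mul_nonneg hw₀ hb), abs_of_nonneg (mul_nonneg hw₁ hb),
      Real.mul_rpow hw₀ hb, Real.mul_rpow hw₁ hb, hw₀d, hw₁d]
    have : (1 - θ) * b ^ d + θ * b ^ d = b ^ d := by ring
    rw [this, ← Real.rpow_mul hb, mul_one_div_cancel hd0.ne', Real.rpow_one]
  rw [hsum1, hsum2, hsum3] at key
  have hS : 0 ≤ (1 - θ) * (L₀ + b) ^ d + θ * (L₁ + b) ^ d :=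
    add_nonneg (mul_nonneg h1θ (Real.rpow_nonneg (by linarith) _))
      (mul_nonneg hθ0 (Real.rpow_nonneg (by linarith) _))
  calc (1 - θ) * (L₀ + b) ^ d + θ * (L₁ + b) ^ d
      = (((1 - θ) * (L₀ + b) ^ d + θ * (L₁ + b) ^ d) ^ (1 / d)) ^ d := by
        rw [← Real.rpow_mul hS, one_div_mul_cancel hd0.ne', Real.rpow_one]
    _ ≤ (Lθ + b) ^ d :=
        Real.rpow_le_rpow (Real.rpow_nonneg hS _) key hd0.le
end
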